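/- arXiv:1909.01705 — 4 statements merged into one kernel-verified Lean document; each statement's English description precedes it below -/
import Mathlib

section
/- Real spherical Hilbert identity: for any x ∈ ℝ^d and n ∈ ℕ, ‖x‖^{2n} = d_ℝ[n] · ∫_{S^{d−1}} ⟨x, v⟩^{2n} dv, where the integral is over the uniform probability measure on the real unit sphere S^{d−1} ⊂ ℝ^d, and d_ℝ[n] = 2^{2n}·n!·Γ(n + d/2) / ((2n)!·Γ(d/2)). -/
open MeasureTheory

open Real Set Metric in
private lemma rshi_gamma_half (n : ℕ) :
    Real.Gamma (n + 1/2) * (4^n * n.factorial) = (2*n).factorial * Real.sqrt π := by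
  induction n with
  | zero =>
    norm_num [show ((0:ℕ):ℝ) + 1/2 = 1/2 by norm_num, Real.Gamma_one_half_eq]
  | succ n ih =>
    have h : ((n:ℝ) + 1) + 1/2 = ((n:ℝ) + 1/2) + 1 := by ring
    rw [Nat.cast_succ, h, Real.Gamma_add_one (by positivity)]
    have h2 : (2 * (n+1)) = (2*n+1) + 1 := by ring
    rw [h2, Nat.factorial_succ, Nat.factorial_succ, Nat.factorial_succ]
    push_cast
    linear_combination (4*((n:ℝ)+1/2)*((n:ℝ)+1)) * ih

open Real Set Metric in
private lemma rshi_moment1d (n : ℕ) :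
    ∫ t : ℝ, t ^ (2*n) * Real.exp (-t^2) = Real.Gamma (n + 1/2) := by
  have h := integral_comp_abs (f := fun s : ℝ => s ^ (2*n) * Real.exp (-s^2))
  simp only [pow_mul, sq_abs] at h
  simp only [pow_mul]
  rw [h]
  have h2 : ∀ x ∈ Ioi (0:ℝ), (x^2) ^ n * Real.exp (-x^2)
      = x ^ ((2*n : ℕ) : ℝ) * Real.exp (-x ^ (2:ℝ)) := by
    intro x hx
    rw [Real.rpow_natCast, Real.rpow_two, pow_mul]
  rw [setIntegral_congr_fun measurableSet_Ioi h2,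
    integral_rpow_mul_exp_neg_rpow (by norm_num)
      (lt_of_lt_of_le neg_one_lt_zero (by positivity)),
    show (((2*n:ℕ):ℝ) + 1)/2 = (n:ℝ) + 1/2 by push_cast; ring]
  ring

open Real Set Metric in
private lemma rshi_normMoment (d : ℕ) (hd : 1 ≤ d) (n : ℕ) :
    ∫ x : EuclideanSpace ℝ (Fin d), ‖x‖^(2*n) * Real.exp (-‖x‖^2)
      = Real.sqrt π ^ d * (Real.Gamma (n + d/2) / Real.Gamma (d/2)) := by
  have : Nonempty (Fin d) := ⟨⟨0, hd⟩⟩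
  have hnt : Nontrivial (EuclideanSpace ℝ (Fin d)) := inferInstance
  have hrank : Module.finrank ℝ (EuclideanSpace ℝ (Fin d)) = d := finrank_euclideanSpace_fin
  have h := integral_fun_norm_addHaar (volume : Measure (EuclideanSpace ℝ (Fin d)))
    (fun r : ℝ => r ^ (2*n) * Real.exp (-r^2))
  rw [hrank] at h
  rw [h]
  have hball : (volume (ball (0 : EuclideanSpace ℝ (Fin d)) 1)).toReal
      = Real.sqrt π ^ d / Real.Gamma (d/2 + 1) := by
    rw [InnerProductSpace.volume_ball, hrank]
    simp [ENNReal.toReal_ofReal (by positivity : (0:ℝ) ≤ Real.sqrt π ^ d / Real.Gamma (d/2+1))]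
  rw [measureReal_def, hball]
  have h2 : ∀ y ∈ Ioi (0:ℝ), y ^ (d-1) • (y ^ (2*n) * Real.exp (-y^2))
      = y ^ (((d - 1 + 2*n : ℕ)) : ℝ) * Real.exp (-y ^ (2:ℝ)) := by
    intro y hy
    rw [smul_eq_mul, Real.rpow_natCast, Real.rpow_two, pow_add, ← mul_assoc]
  rw [setIntegral_congr_fun measurableSet_Ioi h2,
    integral_rpow_mul_exp_neg_rpow (by norm_num)
      (lt_of_lt_of_le neg_one_lt_zero (by positivity))]
  have hcast : (((d - 1 + 2*n : ℕ) : ℝ) + 1)/2 = (n:ℝ) + d/2 := by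
    have : (d - 1 + 2*n : ℕ) = d + 2*n - 1 := by omega
    rw [this, Nat.cast_sub (by omega)]
    push_cast
    ring
  rw [hcast]
  have hΓ : Real.Gamma ((d:ℝ)/2 + 1) = (d/2) * Real.Gamma (d/2) := by
    rw [Real.Gamma_add_one (by positivity)]
  have hd0 : (0:ℝ) < d := by exact_mod_cast hd
  have hΓpos : 0 < Real.Gamma ((d:ℝ)/2) := Real.Gamma_pos_of_pos (by positivity)
  rw [hΓ]
  simp only [nsmul_eq_mul, smul_eq_mul]
  field_simp

open Real Set Metric in
private lemma rshi_innerMoment (d : ℕ) (n : ℕ) (i₀ : Fin d) :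
    ∫ x : EuclideanSpace ℝ (Fin d),
        (inner ℝ x (EuclideanSpace.single i₀ (1:ℝ)) : ℝ)^(2*n) * Real.exp (-‖x‖^2)
      = Real.Gamma (n + 1/2) * Real.sqrt π ^ (d-1) := by
  have hmp := (EuclideanSpace.volume_preserving_symm_measurableEquiv_toLp (Fin d)).symm
  rw [← hmp.integral_comp' (f := (MeasurableEquiv.toLp 2 (Fin d → ℝ)))
    (g := fun x : EuclideanSpace ℝ (Fin d) =>
      (inner ℝ x (EuclideanSpace.single i₀ (1:ℝ)) : ℝ)^(2*n) * Real.exp (-‖x‖^2))]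
  have key : ∀ y : Fin d → ℝ,
      (inner ℝ ((MeasurableEquiv.toLp 2 (Fin d → ℝ)) y)
          (EuclideanSpace.single i₀ (1:ℝ)) : ℝ)^(2*n)
        * Real.exp (-‖(MeasurableEquiv.toLp 2 (Fin d → ℝ)) y‖^2)
      = ∏ i, (if i = i₀ then (y i)^(2*n) else 1) * Real.exp (-(y i)^2) := by
    intro y
    have h1 : ((MeasurableEquiv.toLp 2 (Fin d → ℝ)) y : EuclideanSpace ℝ (Fin d))
        = (WithLp.equiv 2 (Fin d → ℝ)).symm y := by
      rfl
    rw [h1]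
    have h2 : (inner ℝ ((WithLp.equiv 2 (Fin d → ℝ)).symm y)
        (EuclideanSpace.single i₀ (1:ℝ)) : ℝ) = y i₀ := by
      rw [EuclideanSpace.inner_single_right]
      simp
    have h3 : ‖(WithLp.equiv 2 (Fin d → ℝ)).symm y‖^2 = ∑ i, (y i)^2 := by
      rw [EuclideanSpace.norm_eq]
      rw [Real.sq_sqrt (by positivity)]
      simp
    rw [h2, h3, Finset.prod_mul_distrib, ← Real.exp_sum]
    simp [Finset.sum_neg_distrib]
  simp only [key]
  rw [volume_pi]
  rw [MeasureTheory.integral_fintype_prod_eq_prod (f := fun (i : Fin d) (t : ℝ) =>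
    (if i = i₀ then t^(2*n) else 1) * Real.exp (-t^2))]
  have hfac : ∀ i : Fin d, (∫ t : ℝ, (if i = i₀ then t^(2*n) else 1) * Real.exp (-t^2))
      = if i = i₀ then Real.Gamma (n + 1/2) else Real.sqrt π := by
    intro i
    by_cases hi : i = i₀
    · simp only [hi, if_pos rfl]
      exact rshi_moment1d n
    · simp only [if_neg hi, one_mul]
      have := integral_gaussian 1
      simp only [neg_mul, one_mul] at this
      rw [this, div_one]
  simp only [hfac]
  rw [← Finset.mul_prod_erase Finset.univ _ (Finset.mem_univ i₀), if_pos rfl]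
  congr 1
  rw [Finset.prod_congr rfl (fun i hi => if_neg (Finset.ne_of_mem_erase hi)),
    Finset.prod_const, Finset.card_erase_of_mem (Finset.mem_univ i₀), Finset.card_univ,
    Fintype.card_fin]

open Real Set Metric in
private lemma rshi_integrable_exp_norm (d : ℕ) {b : ℝ} (hb : 0 < b) :
    Integrable (fun x : EuclideanSpace ℝ (Fin d) => Real.exp (-b * ‖x‖^2)) := by
  have h := (GaussianFourier.integrable_cexp_neg_mul_sq_norm_add (V := EuclideanSpace ℝ (Fin d))
    (b := (b:ℂ)) (by simpa using hb) 0 (0 : EuclideanSpace ℝ (Fin d))).norm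
  have he : ∀ x : EuclideanSpace ℝ (Fin d),
      rexp (-(b * ((‖x‖:ℂ) ^ 2).re)) = rexp (-b * ‖x‖^2) := by
    intro x
    rw [← Complex.ofReal_pow, Complex.ofReal_re, neg_mul]
  simpa [Complex.norm_exp, he] using h

open Real Set Metric in
private lemma rshi_integrable_norm_moment (d : ℕ) (n : ℕ) :
    Integrable (fun x : EuclideanSpace ℝ (Fin d) => ‖x‖^(2*n) * Real.exp (-‖x‖^2)) := by
  have hmaj : ∀ x : EuclideanSpace ℝ (Fin d),
      ‖‖x‖^(2*n) * Real.exp (-‖x‖^2)‖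
        ≤ ((2*n).factorial * Real.exp (1/2)) * Real.exp (-(1/2) * ‖x‖^2) := by
    intro x
    rw [norm_mul, norm_pow, norm_norm, Real.norm_eq_abs, abs_of_pos (Real.exp_pos _)]
    have h1 : ‖x‖^(2*n) ≤ (2*n).factorial * Real.exp ‖x‖ := by
      have := Real.pow_div_factorial_le_exp ‖x‖ (norm_nonneg x) (2*n)
      rw [div_le_iff₀ (by positivity)] at this
      linarith [this]
    calc ‖x‖^(2*n) * Real.exp (-‖x‖^2)
        ≤ ((2*n).factorial * Real.exp ‖x‖) * Real.exp (-‖x‖^2) := by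
          apply mul_le_mul_of_nonneg_right h1 (Real.exp_pos _).le
      _ = (2*n).factorial * Real.exp (‖x‖ - (1/2) * ‖x‖^2) * Real.exp (-(1/2) * ‖x‖^2) := by
          rw [mul_assoc, ← Real.exp_add, mul_assoc, ← Real.exp_add]; ring_nf
      _ ≤ ((2*n).factorial * Real.exp (1/2)) * Real.exp (-(1/2) * ‖x‖^2) := by
          have : ‖x‖ - (1/2) * ‖x‖^2 ≤ 1/2 := by nlinarith [sq_nonneg (‖x‖ - 1)]
          have := Real.exp_le_exp.mpr this
          gcongr
  refine Integrable.mono' ((rshi_integrable_exp_norm d (by norm_num : (0:ℝ) < 1/2)).const_mul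
    ((2*n).factorial * Real.exp (1/2))) ?_ (Filter.Eventually.of_forall hmaj)
  exact (((continuous_norm.pow _).mul
    ((Real.continuous_exp.comp (continuous_norm.pow 2).neg))).aestronglyMeasurable)

/-- The homeomorphism of the unit sphere induced by a linear isometry equivalence. -/
private noncomputable def rshi_sphereRot {d : ℕ}
    (g : EuclideanSpace ℝ (Fin d) ≃ₗᵢ[ℝ] EuclideanSpace ℝ (Fin d)) :
    Metric.sphere (0 : EuclideanSpace ℝ (Fin d)) 1 ≃ₜ
      Metric.sphere (0 : EuclideanSpace ℝ (Fin d)) 1 where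
  toFun v := ⟨g v.1, by
    rw [mem_sphere_zero_iff_norm, g.norm_map, ← mem_sphere_zero_iff_norm]; exact v.2⟩
  invFun v := ⟨g.symm v.1, by
    rw [mem_sphere_zero_iff_norm, g.symm.norm_map, ← mem_sphere_zero_iff_norm]; exact v.2⟩
  left_inv v := Subtype.ext (g.symm_apply_apply v.1)
  right_inv v := Subtype.ext (g.apply_symm_apply v.1)
  continuous_toFun := Continuous.subtype_mk (g.continuous.comp continuous_subtype_val)
    (fun v => by
      show g v.1 ∈ _
      rw [mem_sphere_zero_iff_norm, g.norm_map, ← mem_sphere_zero_iff_norm]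
      exact v.2)
  continuous_invFun := Continuous.subtype_mk (g.symm.continuous.comp continuous_subtype_val)
    (fun v => by
      show g.symm v.1 ∈ _
      rw [mem_sphere_zero_iff_norm, g.symm.norm_map, ← mem_sphere_zero_iff_norm]
      exact v.2)

open Real Set Metric in
private lemma rshi_sphere_rotate_integral {d : ℕ}
    (μ : Measure (Metric.sphere (0 : EuclideanSpace ℝ (Fin d)) 1))
    (g : EuclideanSpace ℝ (Fin d) ≃ₗᵢ[ℝ] EuclideanSpace ℝ (Fin d))
    (h : MeasurePreserving (⇑(rshi_sphereRot g)) μ μ)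
    (f : EuclideanSpace ℝ (Fin d) → ℝ) :
    ∫ v, f (g v.1) ∂μ = ∫ v, f v.1 ∂μ := by
  have := h.integral_comp (rshi_sphereRot g).measurableEmbedding
    (fun v : Metric.sphere (0 : EuclideanSpace ℝ (Fin d)) 1 => f v.1)
  exact this

/-- Real spherical Hilbert identity: for the uniform (rotation-invariant)
probability measure `μ` on the unit sphere of `ℝ^d`,
`‖x‖^{2n} = d_ℝ[n] · ∫ ⟨x,v⟩^{2n} dv` with
`d_ℝ[n] = 2^{2n}·n!·Γ(n+d/2)/((2n)!·Γ(d/2))`. -/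
theorem real_spherical_hilbert_identity (d : ℕ) (hd : 1 ≤ d) (n : ℕ)
    (μ : Measure (Metric.sphere (0 : EuclideanSpace ℝ (Fin d)) 1))
    [IsProbabilityMeasure μ]
    (hinv : ∀ g : EuclideanSpace ℝ (Fin d) ≃ₗᵢ[ℝ] EuclideanSpace ℝ (Fin d),
      MeasurePreserving
        (fun v : Metric.sphere (0 : EuclideanSpace ℝ (Fin d)) 1 =>
          (⟨g v.1, by
            rw [mem_sphere_zero_iff_norm, g.norm_map, ← mem_sphere_zero_iff_norm]
            exact v.2⟩ : Metric.sphere (0 : EuclideanSpace ℝ (Fin d)) 1)) μ μ)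
    (x : EuclideanSpace ℝ (Fin d)) :
    ‖x‖ ^ (2 * n) =
      (2 ^ (2 * n) * n.factorial * Real.Gamma (n + d / 2)) /
        ((2 * n).factorial * Real.Gamma (d / 2)) *
      ∫ v, (inner ℝ x (v : EuclideanSpace ℝ (Fin d)) : ℝ) ^ (2 * n) ∂μ := by
  classical
  let i₀ : Fin d := ⟨0, hd⟩
  set e₁ : EuclideanSpace ℝ (Fin d) := EuclideanSpace.single i₀ (1:ℝ) with he₁def
  have he₁ : ‖e₁‖ = 1 := by rw [he₁def, EuclideanSpace.norm_single]; simp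
  set c : ℝ := ∫ v : Metric.sphere (0 : EuclideanSpace ℝ (Fin d)) 1, (inner ℝ e₁ (v : EuclideanSpace ℝ (Fin d)) : ℝ)^(2*n) ∂μ with hcdef
  -- Claim 1: homogeneity via rotation invariance
  have claim1 : ∀ z : EuclideanSpace ℝ (Fin d),
      (∫ v : Metric.sphere (0 : EuclideanSpace ℝ (Fin d)) 1, (inner ℝ z (v : EuclideanSpace ℝ (Fin d)) : ℝ)^(2*n) ∂μ) = ‖z‖^(2*n) * c := by
    intro z
    have hyz : ‖(‖z‖ • e₁ : EuclideanSpace ℝ (Fin d))‖ = ‖z‖ := by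
      rw [norm_smul, he₁, norm_norm, mul_one]
    set g := Submodule.reflection (ℝ ∙ ((‖z‖ • e₁) - z))ᗮ with hgdef
    have hg : g (‖z‖ • e₁) = z := Submodule.reflection_sub hyz
    have h1 : (∫ v : Metric.sphere (0 : EuclideanSpace ℝ (Fin d)) 1, (inner ℝ z (v : EuclideanSpace ℝ (Fin d)) : ℝ)^(2*n) ∂μ)
        = ∫ v : Metric.sphere (0 : EuclideanSpace ℝ (Fin d)) 1, (inner ℝ z (g (v : EuclideanSpace ℝ (Fin d))) : ℝ)^(2*n) ∂μ :=
      (rshi_sphere_rotate_integral μ g (hinv g)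
        (fun w => (inner ℝ z w : ℝ)^(2*n))).symm
    rw [h1]
    have h2 : ∀ v : Metric.sphere (0 : EuclideanSpace ℝ (Fin d)) 1, (inner ℝ z (g (v : EuclideanSpace ℝ (Fin d))) : ℝ)
        = ‖z‖ * inner ℝ e₁ (v : EuclideanSpace ℝ (Fin d)) := by
      intro v
      calc (inner ℝ z (g (v : EuclideanSpace ℝ (Fin d))) : ℝ)
          = inner ℝ (g (‖z‖ • e₁)) (g (v : EuclideanSpace ℝ (Fin d))) := by rw [hg]
        _ = inner ℝ (‖z‖ • e₁) (v : EuclideanSpace ℝ (Fin d)) := g.inner_map_map _ _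
        _ = ‖z‖ * inner ℝ e₁ (v : EuclideanSpace ℝ (Fin d)) := real_inner_smul_left _ _ _
    simp only [h2, mul_pow]
    rw [integral_const_mul]
  -- Claim 2: Gaussian directional moment independent of unit direction
  have claim2 : ∀ w : EuclideanSpace ℝ (Fin d), ‖w‖ = 1 →
      (∫ y : EuclideanSpace ℝ (Fin d), (inner ℝ y w : ℝ)^(2*n) * Real.exp (-‖y‖^2))
        = Real.Gamma (n + 1/2) * Real.sqrt Real.pi ^ (d-1) := by
    intro w hw
    set g := Submodule.reflection (ℝ ∙ (e₁ - w))ᗮ with hgdef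
    have hg : g e₁ = w := Submodule.reflection_sub (by rw [he₁, hw])
    have hmp : MeasurePreserving (⇑g) volume volume :=
      LinearIsometryEquiv.measurePreserving g
    have h1 : (∫ y : EuclideanSpace ℝ (Fin d), (inner ℝ y w : ℝ)^(2*n) * Real.exp (-‖y‖^2))
        = ∫ y : EuclideanSpace ℝ (Fin d),
            (inner ℝ (g y) w : ℝ)^(2*n) * Real.exp (-‖g y‖^2) :=
      (hmp.integral_comp g.toHomeomorph.measurableEmbedding
        (fun y => (inner ℝ y w : ℝ)^(2*n) * Real.exp (-‖y‖^2))).symm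
    rw [h1]
    have h2 : ∀ y : EuclideanSpace ℝ (Fin d),
        (inner ℝ (g y) w : ℝ)^(2*n) * Real.exp (-‖g y‖^2)
          = (inner ℝ y e₁ : ℝ)^(2*n) * Real.exp (-‖y‖^2) := by
      intro y
      rw [← hg, g.inner_map_map, g.norm_map]
    simp only [h2]
    exact rshi_innerMoment d n i₀
  -- Integrability on the sphere
  have hIntS : ∀ z : EuclideanSpace ℝ (Fin d),
      Integrable (fun v : Metric.sphere (0 : EuclideanSpace ℝ (Fin d)) 1 => (inner ℝ z (v : EuclideanSpace ℝ (Fin d)) : ℝ)^(2*n)) μ := by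
    intro z
    have hcont : Continuous (fun v : Metric.sphere (0 : EuclideanSpace ℝ (Fin d)) 1 => (inner ℝ z (v : EuclideanSpace ℝ (Fin d)) : ℝ)^(2*n)) :=
      ((continuous_const.inner continuous_subtype_val).pow _)
    exact hcont.integrable_of_hasCompactSupport (HasCompactSupport.of_compactSpace _)
  -- Fubini
  let f : EuclideanSpace ℝ (Fin d) → Metric.sphere (0 : EuclideanSpace ℝ (Fin d)) 1 → ℝ := fun y v =>
    (inner ℝ y (v : EuclideanSpace ℝ (Fin d)) : ℝ)^(2*n) * Real.exp (-‖y‖^2)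
  have hFcont : Continuous (Function.uncurry f) := by
    apply Continuous.mul
    · exact (continuous_fst.inner (continuous_subtype_val.comp continuous_snd)).pow _
    · exact Real.continuous_exp.comp (continuous_fst.norm.pow 2).neg
  have hFint : Integrable (Function.uncurry f) (volume.prod μ) := by
    rw [integrable_prod_iff hFcont.aestronglyMeasurable]
    constructor
    · refine Filter.Eventually.of_forall (fun y => ?_)
      simpa only [Function.uncurry] using ((hIntS y).mul_const (Real.exp (-‖y‖^2)))
    · have hbd : ∀ y : EuclideanSpace ℝ (Fin d),
          (∫ v : Metric.sphere (0 : EuclideanSpace ℝ (Fin d)) 1, ‖f y v‖ ∂μ) ≤ ‖y‖^(2*n) * Real.exp (-‖y‖^2) := by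
        intro y
        have hle : ∀ v : Metric.sphere (0 : EuclideanSpace ℝ (Fin d)) 1, ‖f y v‖ ≤ ‖y‖^(2*n) * Real.exp (-‖y‖^2) := by
          intro v
          have hv : ‖(v : EuclideanSpace ℝ (Fin d))‖ = 1 :=
            mem_sphere_zero_iff_norm.mp v.2
          have hinner : |(inner ℝ y (v : EuclideanSpace ℝ (Fin d)) : ℝ)| ≤ ‖y‖ := by
            calc |(inner ℝ y (v : EuclideanSpace ℝ (Fin d)) : ℝ)|
                ≤ ‖y‖ * ‖(v : EuclideanSpace ℝ (Fin d))‖ := abs_real_inner_le_norm _ _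
              _ = ‖y‖ := by rw [hv, mul_one]
          rw [norm_mul, norm_pow, Real.norm_eq_abs, Real.norm_eq_abs,
            abs_of_pos (Real.exp_pos _)]
          have h1 : |(inner ℝ y (v : EuclideanSpace ℝ (Fin d)) : ℝ)|^(2*n) ≤ ‖y‖^(2*n) :=
            pow_le_pow_left₀ (abs_nonneg _) hinner _
          exact mul_le_mul_of_nonneg_right h1 (Real.exp_pos _).le
        calc (∫ v : Metric.sphere (0 : EuclideanSpace ℝ (Fin d)) 1, ‖f y v‖ ∂μ) ≤ ∫ _v : Metric.sphere (0 : EuclideanSpace ℝ (Fin d)) 1, ‖y‖^(2*n) * Real.exp (-‖y‖^2) ∂μ := by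
              apply integral_mono ((hIntS y).mul_const _).norm (integrable_const _) hle
          _ = ‖y‖^(2*n) * Real.exp (-‖y‖^2) := by
              rw [integral_const, probReal_univ, one_smul]
      refine Integrable.mono' (rshi_integrable_norm_moment d n) ?_
        (Filter.Eventually.of_forall (fun y => ?_))
      · exact (hFcont.aestronglyMeasurable.norm.integral_prod_right')
      · rw [Real.norm_eq_abs, abs_of_nonneg (integral_nonneg (fun v => norm_nonneg _))]
        exact hbd y
  have hswap := integral_integral_swap hFint
  -- compute both sides of Fubini
  have hLHS : (∫ y : EuclideanSpace ℝ (Fin d), ∫ v : Metric.sphere (0 : EuclideanSpace ℝ (Fin d)) 1, f y v ∂μ)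
      = c * (Real.sqrt Real.pi ^ d * (Real.Gamma (n + d/2) / Real.Gamma (d/2))) := by
    have h1 : ∀ y : EuclideanSpace ℝ (Fin d),
        (∫ v : Metric.sphere (0 : EuclideanSpace ℝ (Fin d)) 1, f y v ∂μ) = c * (‖y‖^(2*n) * Real.exp (-‖y‖^2)) := by
      intro y
      show (∫ v : Metric.sphere (0 : EuclideanSpace ℝ (Fin d)) 1, (inner ℝ y (v : EuclideanSpace ℝ (Fin d)) : ℝ)^(2*n)
          * Real.exp (-‖y‖^2) ∂μ) = _
      rw [integral_mul_const, claim1 y]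
      ring
    simp only [h1]
    rw [integral_const_mul, rshi_normMoment d hd n]
  have hRHS : (∫ v : Metric.sphere (0 : EuclideanSpace ℝ (Fin d)) 1, ∫ y : EuclideanSpace ℝ (Fin d), f y v ∂volume ∂μ)
      = Real.Gamma (n + 1/2) * Real.sqrt Real.pi ^ (d-1) := by
    have h1 : ∀ v : Metric.sphere (0 : EuclideanSpace ℝ (Fin d)) 1, (∫ y : EuclideanSpace ℝ (Fin d), f y v)
        = Real.Gamma (n + 1/2) * Real.sqrt Real.pi ^ (d-1) := by
      intro v
      exact claim2 _ (mem_sphere_zero_iff_norm.mp v.2)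
    simp only [h1]
    rw [integral_const, probReal_univ, one_smul]
  have hkey : c * (Real.sqrt Real.pi ^ d * (Real.Gamma (n + d/2) / Real.Gamma (d/2)))
      = Real.Gamma (n + 1/2) * Real.sqrt Real.pi ^ (d-1) := by
    rw [← hLHS, ← hRHS]
    exact hswap
  rw [claim1 x]
  have hd0 : (0:ℝ) < (d:ℝ) := by exact_mod_cast hd
  have hΓn : (0:ℝ) < Real.Gamma ((n:ℝ) + (d:ℝ)/2) := Real.Gamma_pos_of_pos (by positivity)
  have hΓd : (0:ℝ) < Real.Gamma ((d:ℝ)/2) := Real.Gamma_pos_of_pos (by positivity)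
  have hfac1 : (0:ℝ) < ((2*n).factorial : ℝ) := by exact_mod_cast Nat.factorial_pos _
  have hfac2 : (0:ℝ) < ((n.factorial : ℕ) : ℝ) := by exact_mod_cast Nat.factorial_pos _
  have hπ : (0:ℝ) < Real.sqrt Real.pi := Real.sqrt_pos.mpr Real.pi_pos
  have hπd1 : (0:ℝ) < Real.sqrt Real.pi ^ (d-1) := by positivity
  have hpowd : Real.sqrt Real.pi ^ d = Real.sqrt Real.pi ^ (d-1) * Real.sqrt Real.pi := by
    conv_lhs => rw [show d = (d-1)+1 by omega]
    rw [pow_succ]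
  rw [hpowd] at hkey
  have hghalf := rshi_gamma_half n
  have h4 : (2:ℝ)^(2*n) = 4^n := by rw [pow_mul]; norm_num
  field_simp at hkey
  have hKc : (2 ^ (2*n) * (n.factorial:ℝ) * Real.Gamma (n + d/2)) /
      ((2*n).factorial * Real.Gamma (d/2)) * c = 1 := by
    rw [h4, div_mul_eq_mul_div, div_eq_one_iff_eq (by positivity)]
    rw [show ((n:ℝ) * 2 + (d:ℝ)) / 2 = (n:ℝ) + (d:ℝ)/2 from by ring,
      show ((n:ℝ) * 2 + 1) / 2 = (n:ℝ) + 1/2 from by ring] at hkey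
    apply mul_left_cancel₀ (ne_of_gt (mul_pos hπd1 hπ))
    linear_combination (Real.sqrt Real.pi ^ (d-1) * (4:ℝ)^n * n.factorial) * hkey
      + (Real.sqrt Real.pi ^ (d-1) * Real.Gamma ((d:ℝ)/2)) * hghalf
  calc ‖x‖^(2*n) = ((2 ^ (2*n) * (n.factorial:ℝ) * Real.Gamma (n + d/2)) /
      ((2*n).factorial * Real.Gamma (d/2)) * c) * ‖x‖^(2*n) := by rw [hKc, one_mul]
    _ = _ := by ring
end

section
/- Complex moment problem: for any m ∈ ℕ there exist nonnegative weights w_j ≥ 0 and complex numbers α_j ∈ ℂ, j = 1,…,m², such that for all k, l ∈ {0,…,m−1}: ∑_{j=1}^{m²} w_j · ᾱ_j^k · α_j^l = k! if k = l and 0 otherwise. -/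
/-!
The weight `e^{-x}` on `(0, ∞)` has moments `k!`. Gaussian quadrature replaces it by the `m`
zeros `β_s > 0` of the degree-`m` orthogonal polynomial, with weights `w_s = L ℓ_s = L ℓ_s² > 0`
(`ℓ_s` the Lagrange basis, `L` the integral), exact up to degree `2m - 1`. Spreading each node
over the circle of radius `√β_s` as `α_{st} = √β_s ζ^t`, with `ζ` a primitive `m`-th root of
unity, gives `∑_t ᾱ_{st}^k α_{st}^l = β_s^k ∑_t ζ^{(l-k)t}`, which is `m β_s^k` if `k = l` and
`0` otherwise.
-/

open Complex ComplexConjugate Polynomial Finset MeasureTheory Set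

section Field

variable {K : Type*} [Field K] {L : K[X] →ₗ[K] K}

def IsOrthogonalPolynomial (L : K[X] →ₗ[K] K) (P : K[X]) : Prop :=
  ∀ q : K[X], q.degree < P.natDegree → L (P * q) = 0

theorem exists_monic_isOrthogonalPolynomial (hL : ∀ p : K[X], p ≠ 0 → L (p * p) ≠ 0) (m : ℕ) :
    ∃ P : K[X], P.Monic ∧ P.natDegree = m ∧ IsOrthogonalPolynomial L P := by
  let V := degreeLT K m
  let B : LinearMap.BilinForm K V :=
    ((LinearMap.mul K K[X]).compl₁₂ V.subtype V.subtype).compr₂ L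
  have hB_anisotropic (a : V) (ha : B a a = 0) : a = 0 := by
    by_contra h
    exact hL a (by simpa using h) ha
  have hB : B.Nondegenerate :=
    ⟨fun a ha => hB_anisotropic a (ha a), fun a ha => hB_anisotropic a (ha a)⟩
  -- `P = X ^ m + a` with `L (a * q) = -L (X ^ m * q)` for all `q` of degree `< m`
  let f : Module.Dual K V := -(L ∘ₗ LinearMap.mulLeft K (X ^ m) ∘ₗ V.subtype)
  obtain ⟨a, ha⟩ := (B.toDual hB).surjective f
  have ha_deg : (a : K[X]).degree < m := mem_degreeLT.mp a.2
  have hdeg : (X ^ m + (a : K[X])).natDegree = m := by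
    rw [natDegree_add_eq_left_of_degree_lt (by rwa [degree_X_pow]), natDegree_X_pow]
  refine ⟨X ^ m + (a : K[X]), monic_X_pow_add ha_deg, hdeg, fun q hq => ?_⟩
  rw [hdeg] at hq
  have haq := LinearMap.congr_fun ha ⟨q, mem_degreeLT.mpr hq⟩
  simp only [LinearMap.BilinForm.toDual_def, LinearMap.compr₂_apply, LinearMap.compl₁₂_apply,
    Submodule.subtype_apply, LinearMap.mul_apply_apply, LinearMap.neg_apply, LinearMap.coe_comp,
    Submodule.coe_subtype, Function.comp_apply, LinearMap.mulLeft_apply, B, f] at haq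
  rw [add_mul, map_add, haq, add_neg_cancel]

theorem IsOrthogonalPolynomial.nodup_roots {P : K[X]} (hP : IsOrthogonalPolynomial L P)
    (hL : ∀ p : K[X], p ≠ 0 → L (p * p) ≠ 0) (hP0 : P ≠ 0) : P.roots.Nodup := by
  classical
  refine Multiset.nodup_iff_count_le_one.mpr fun r => ?_
  by_contra! hr
  rw [count_roots] at hr
  obtain ⟨g, hg⟩ := (le_rootMultiplicity_iff hP0).mp hr
  have hg0 : g ≠ 0 := by rintro rfl; exact hP0 (by simpa using hg)
  have hdeg : g.degree < P.natDegree := by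
    rw [hg, natDegree_mul (pow_ne_zero _ (X_sub_C_ne_zero r)) hg0, natDegree_pow,
      natDegree_X_sub_C]
    exact degree_le_natDegree.trans_lt (by norm_cast; omega)
  refine hL ((X - C r) * g) (mul_ne_zero (X_sub_C_ne_zero r) hg0) ?_
  rw [← hP g hdeg, hg]
  congr 1
  ring

variable [DecidableEq K]

theorem map_eq_sum_basis_of_degree_lt_card (L : K[X] →ₗ[K] K) (t : Finset K) {p : K[X]}
    (hp : p.degree < #t) : L p = ∑ x ∈ t, L (Lagrange.basis t id x) * p.eval x := by
  conv_lhs => rw [Lagrange.eq_interpolate (Set.injOn_id _) hp, Lagrange.interpolate_apply]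
  simp only [map_sum, C_mul', map_smul, smul_eq_mul, id]
  exact sum_congr rfl fun _ _ => mul_comm _ _

theorem IsOrthogonalPolynomial.map_eq_sum_basis_of_degree_lt_two_mul_card {P : K[X]}
    (hP : IsOrthogonalPolynomial L P) (hPm : P.Monic) {t : Finset K} (hPdeg : P.natDegree = #t)
    (hPt : ∀ x ∈ t, P.IsRoot x) {p : K[X]} (hp : p.degree < 2 * #t) :
    L p = ∑ x ∈ t, L (Lagrange.basis t id x) * p.eval x := by
  have hquot : (p /ₘ P).degree < P.natDegree := by
    by_cases hq0 : p /ₘ P = 0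
    · simp [hq0]
    have hp0 : p ≠ 0 := by rintro rfl; simp at hq0
    rw [degree_eq_natDegree hq0, natDegree_divByMonic p hPm]
    have := (natDegree_lt_iff_degree_lt hp0).mpr (by exact_mod_cast hp)
    exact_mod_cast (by omega)
  have hrem : (p %ₘ P).degree < #t := by
    rw [← hPdeg, ← degree_eq_natDegree hPm.ne_zero]
    exact degree_modByMonic_lt p hPm
  conv_lhs => rw [← modByMonic_add_div p P]
  rw [map_add, hP _ hquot, add_zero, map_eq_sum_basis_of_degree_lt_card L t hrem]
  refine sum_congr rfl fun x hx => ?_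
  conv_rhs => rw [← modByMonic_add_div p P]
  rw [eval_add, eval_mul, hPt x hx, zero_mul, add_zero]

end Field

theorem Polynomial.nonneg_or_nonpos_of_forall_not_isRoot {s : Set ℝ} {p : ℝ[X]}
    (hs : IsPreconnected s) (hp : ∀ x ∈ s, ¬p.IsRoot x) :
    (∀ x ∈ s, 0 ≤ p.eval x) ∨ (∀ x ∈ s, p.eval x ≤ 0) := by
  by_contra! ⟨⟨a, ha, hpa⟩, ⟨b, hb, hpb⟩⟩
  obtain ⟨c, hc, hpc⟩ :=
    hs.intermediate_value ha hb p.continuous.continuousOn ⟨hpa.le, hpb.le⟩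
  exact hp c hc hpc

def StrictlyPositiveOn (L : ℝ[X] →ₗ[ℝ] ℝ) (s : Set ℝ) : Prop :=
  ∀ p : ℝ[X], p ≠ 0 → (∀ x ∈ s, 0 ≤ p.eval x) → 0 < L p

namespace StrictlyPositiveOn

variable {L : ℝ[X] →ₗ[ℝ] ℝ} {s : Set ℝ}

theorem mul_self_pos (hL : StrictlyPositiveOn L s) {p : ℝ[X]} (hp : p ≠ 0) : 0 < L (p * p) :=
  hL _ (mul_self_ne_zero.mpr hp) fun x _ => by rw [eval_mul]; exact mul_self_nonneg _

theorem map_ne_zero (hL : StrictlyPositiveOn L s) {p : ℝ[X]} (hp : p ≠ 0)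
    (hsign : (∀ x ∈ s, 0 ≤ p.eval x) ∨ (∀ x ∈ s, p.eval x ≤ 0)) : L p ≠ 0 := by
  rcases hsign with hnonneg | hnonpos
  · exact (hL p hp hnonneg).ne'
  · have hneg := hL (-p) (neg_ne_zero.mpr hp) (by simpa using hnonpos)
    rw [map_neg] at hneg
    exact (neg_pos.mp hneg).ne

theorem natDegree_le_card_roots_filter_mem [DecidablePred (· ∈ s)] (hL : StrictlyPositiveOn L s)
    (hs : IsPreconnected s) {P : ℝ[X]} (hP : IsOrthogonalPolynomial L P) (hP0 : P ≠ 0) :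
    P.natDegree ≤ Multiset.card (P.roots.filter (· ∈ s)) := by
  set T := P.roots.filter (· ∈ s)
  set q := (T.map (X - C ·)).prod
  obtain ⟨g, hPg⟩ : q ∣ P :=
    (Multiset.prod_X_sub_C_dvd_iff_le_roots hP0 T).mpr (Multiset.filter_le _ _)
  have hg0 : g ≠ 0 := by rintro rfl; exact hP0 (by simpa using hPg)
  have hq0 : q ≠ 0 := (monic_multiset_prod_of_monic _ _ fun r _ => monic_X_sub_C r).ne_zero
  have hroots : P.roots = T + g.roots := by
    conv_lhs => rw [hPg]
    rw [roots_mul (mul_ne_zero hq0 hg0), roots_multiset_prod_X_sub_C]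
  have hg_root (x : ℝ) (hx : x ∈ s) : ¬g.IsRoot x := fun hgx => by
    have hT : Multiset.count x T = Multiset.count x P.roots := Multiset.count_filter_of_pos hx
    rw [hroots, Multiset.count_add] at hT
    have := Multiset.count_pos.mpr ((mem_roots hg0).mpr hgx)
    omega
  -- otherwise `q` is orthogonal to `P`, but `P * q = q² g` has constant sign on `s`
  by_contra! hlt
  have hsign := nonneg_or_nonpos_of_forall_not_isRoot hs hg_root
  refine hL.map_ne_zero (p := q * q * g) (by simp [hq0, hg0]) ?_ ?_
  · simp only [eval_mul]
    exact hsign.imp (fun h x hx => mul_nonneg (mul_self_nonneg _) (h x hx))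
      (fun h x hx => mul_nonpos_of_nonneg_of_nonpos (mul_self_nonneg _) (h x hx))
  · have hq : q.degree < P.natDegree := by
      rw [degree_eq_natDegree hq0, natDegree_multiset_prod_X_sub_C_eq_card]
      exact_mod_cast hlt
    rw [← hP q hq, hPg]
    congr 1
    ring

theorem exists_gaussQuadrature (hL : StrictlyPositiveOn L s) (hs : IsPreconnected s) (m : ℕ) :
    ∃ (t : Finset ℝ) (w : ℝ → ℝ), #t = m ∧ ↑t ⊆ s ∧ (∀ x ∈ t, 0 < w x) ∧
      ∀ p : ℝ[X], p.degree < 2 * m → L p = ∑ x ∈ t, w x * p.eval x := by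
  classical
  have hL' (p : ℝ[X]) (hp : p ≠ 0) : L (p * p) ≠ 0 := (hL.mul_self_pos hp).ne'
  obtain ⟨P, hPm, hPdeg, hP⟩ := exists_monic_isOrthogonalPolynomial hL' m
  have hle := hL.natDegree_le_card_roots_filter_mem hs hP hPm.ne_zero
  have hfilter : P.roots.filter (· ∈ s) = P.roots :=
    Multiset.eq_of_le_of_card_le (Multiset.filter_le _ _) (P.card_roots'.trans hle)
  set t := P.roots.toFinset
  have ht : #t = m := by
    rw [Multiset.toFinset_card_of_nodup (hP.nodup_roots hL' hPm.ne_zero), ← hPdeg]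
    exact le_antisymm P.card_roots' (hle.trans (Multiset.card_le_card (Multiset.filter_le _ _)))
  have hPt (x : ℝ) (hx : x ∈ t) : P.IsRoot x :=
    (mem_roots hPm.ne_zero).mp (Multiset.mem_toFinset.mp hx)
  have hexact (p : ℝ[X]) (hp : p.degree < 2 * m) :
      L p = ∑ x ∈ t, L (Lagrange.basis t id x) * p.eval x :=
    hP.map_eq_sum_basis_of_degree_lt_two_mul_card hPm (hPdeg.trans ht.symm) hPt (by rwa [ht])
  refine ⟨t, fun x => L (Lagrange.basis t id x), ht,
    fun x hx => Multiset.filter_eq_self.mp hfilter x (Multiset.mem_toFinset.mp hx),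
    fun x hx => ?_, hexact⟩
  set b := Lagrange.basis t id x
  have hsq : (b * b).degree < 2 * m := by
    have := card_pos.mpr ⟨x, hx⟩
    rw [degree_mul, Lagrange.degree_basis (Set.injOn_id _) hx, ← ht]
    norm_cast
    omega
  have hself : b.eval x = 1 := Lagrange.eval_basis_self (Set.injOn_id _) hx
  have hother (y : ℝ) (hy : y ∈ t) (hyx : y ≠ x) : b.eval y = 0 :=
    Lagrange.eval_basis_of_ne (v := id) hyx.symm hy
  calc 0 < L (b * b) := hL.mul_self_pos (Lagrange.basis_ne_zero (Set.injOn_id _) hx)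
    _ = L b := by
      rw [hexact _ hsq, sum_eq_single_of_mem x hx fun y hy hyx => by
        rw [eval_mul, hother y hy hyx, zero_mul, mul_zero], eval_mul, hself, mul_one, mul_one]

end StrictlyPositiveOn

theorem integrableOn_eval_mul_exp_neg (p : ℝ[X]) :
    IntegrableOn (fun x => p.eval x * Real.exp (-x)) (Ioi 0) := by
  induction p using Polynomial.induction_on' with
  | add p q hp hq =>
    simp only [eval_add, add_mul]
    exact hp.add hq
  | monomial n a =>
    have h := Real.GammaIntegral_convergent (s := n + 1) (by positivity)
    refine IntegrableOn.congr_fun (h.const_mul a) (fun x _ => ?_) measurableSet_Ioi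
    simp only [add_sub_cancel_right, Real.rpow_natCast, eval_monomial]
    ring

noncomputable def laguerreFunctional : ℝ[X] →ₗ[ℝ] ℝ where
  toFun p := ∫ x in Ioi 0, p.eval x * Real.exp (-x)
  map_add' p q := by
    simp only [eval_add, add_mul]
    exact integral_add (integrableOn_eval_mul_exp_neg p) (integrableOn_eval_mul_exp_neg q)
  map_smul' c p := by
    simp only [eval_smul, smul_eq_mul, mul_assoc, RingHom.id_apply]
    exact integral_const_mul c _

theorem laguerreFunctional_X_pow (k : ℕ) : laguerreFunctional (X ^ k) = k.factorial := by
  rw [← Real.Gamma_nat_eq_factorial, Real.Gamma_eq_integral (by positivity)]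
  refine setIntegral_congr_fun measurableSet_Ioi fun x _ => ?_
  simp only [eval_pow, eval_X, add_sub_cancel_right, Real.rpow_natCast, mul_comm]

theorem strictlyPositiveOn_laguerreFunctional : StrictlyPositiveOn laguerreFunctional (Ioi 0) := by
  intro p hp0 hp
  have hnonneg : 0 ≤ᵐ[volume.restrict (Ioi 0)] fun x => p.eval x * Real.exp (-x) := by
    filter_upwards [ae_restrict_mem measurableSet_Ioi] with x hx
    exact mul_nonneg (hp x hx) (Real.exp_pos _).le
  change 0 < ∫ x in Ioi 0, p.eval x * Real.exp (-x)
  rw [setIntegral_pos_iff_support_of_nonneg_ae hnonneg (integrableOn_eval_mul_exp_neg p)]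
  have hroots : volume {x | p.IsRoot x} = 0 := (p.finite_setOfPred_isRoot hp0).measure_zero _
  calc (0 : ENNReal) < volume (Ioi (0 : ℝ) \ {x | p.IsRoot x}) := by
        rw [measure_sdiff_null hroots]; simp
    _ ≤ volume (Function.support (fun x => p.eval x * Real.exp (-x)) ∩ Ioi 0) :=
        measure_mono fun x ⟨hx, hroot⟩ => ⟨mul_ne_zero hroot (Real.exp_pos _).ne', hx⟩

theorem IsPrimitiveRoot.sum_conj_pow_mul_pow {ζ : ℂ} {m : ℕ} (hζ : IsPrimitiveRoot ζ m) {k l : ℕ}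
    (hk : k < m) (hl : l < m) :
    ∑ t : Fin m, conj (ζ ^ (t : ℕ)) ^ k * (ζ ^ (t : ℕ)) ^ l = if k = l then (m : ℂ) else 0 := by
  have hζ0 : ζ ≠ 0 := hζ.ne_zero (by omega)
  have hconj : conj ζ = ζ⁻¹ := (inv_eq_conj (hζ.norm'_eq_one (by omega))).symm
  set u := ζ ^ l / ζ ^ k
  have hterm (t : ℕ) : conj (ζ ^ t) ^ k * (ζ ^ t) ^ l = u ^ t := by
    rw [map_pow, hconj, div_pow, ← pow_mul, ← pow_mul, ← pow_mul, ← pow_mul]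
    ring
  simp only [hterm, Fin.sum_univ_eq_sum_range (u ^ ·)]
  split_ifs with hkl
  · simp [u, hkl, hζ0]
  have hu : u ≠ 1 := fun h =>
    hkl (hζ.pow_inj hk hl ((div_eq_one_iff_eq (pow_ne_zero _ hζ0)).mp h).symm)
  have hum : u ^ m = 1 := by
    rw [div_pow, ← pow_mul, ← pow_mul, mul_comm l, mul_comm k, pow_mul, pow_mul, hζ.pow_eq_one,
      one_pow, one_pow, div_one]
  rw [geom_sum_eq hu, hum, sub_self, zero_div]

theorem sum_conj_pow_mul_pow_sqrt_mul_rootOfUnity {ι : Type*} [Fintype ι] (w x : ι → ℝ)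
    (hx : ∀ i, 0 ≤ x i) {ζ : ℂ} {m : ℕ} (hζ : IsPrimitiveRoot ζ m) {k l : ℕ} (hk : k < m)
    (hl : l < m) :
    ∑ j : ι × Fin m, ((w j.1 / m : ℝ) : ℂ) * conj ((√(x j.1) : ℂ) * ζ ^ (j.2 : ℕ)) ^ k *
        ((√(x j.1) : ℂ) * ζ ^ (j.2 : ℕ)) ^ l
      = if k = l then ((∑ i, w i * x i ^ k : ℝ) : ℂ) else 0 := by
  have hterm (i : ι) (t : Fin m) :
      ((w i / m : ℝ) : ℂ) * conj ((√(x i) : ℂ) * ζ ^ (t : ℕ)) ^ k *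
          ((√(x i) : ℂ) * ζ ^ (t : ℕ)) ^ l
        = ((w i / m * √(x i) ^ (k + l) : ℝ) : ℂ) *
          (conj (ζ ^ (t : ℕ)) ^ k * (ζ ^ (t : ℕ)) ^ l) := by
    rw [map_mul, conj_ofReal]
    push_cast
    ring
  simp only [Fintype.sum_prod_type, hterm, ← mul_sum, hζ.sum_conj_pow_mul_pow hk hl]
  split_ifs with hkl
  · subst hkl
    have hm : (m : ℂ) ≠ 0 := by exact_mod_cast (show m ≠ 0 by omega)
    rw [ofReal_sum]
    refine sum_congr rfl fun i _ => ?_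
    rw [← two_mul, pow_mul, Real.sq_sqrt (hx i)]
    push_cast
    field_simp
  · simp

/-- Complex moment problem: for any `m` there are `m²` nonnegative weights `w_j`
and nodes `α_j ∈ ℂ` with `∑_j w_j ᾱ_j^k α_j^l = k!·δ_{k,l}` for `k,l < m`. -/
theorem complex_moment_problem (m : ℕ) :
    ∃ (w : Fin (m ^ 2) → ℝ) (α : Fin (m ^ 2) → ℂ),
      (∀ j, 0 ≤ w j) ∧
      ∀ k l : ℕ, k < m → l < m →
        ∑ j, (w j : ℂ) * ((starRingEnd ℂ) (α j)) ^ k * (α j) ^ l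
          = if k = l then (k.factorial : ℂ) else 0 := by
  obtain ⟨t, w, ht, hts, hw, hexact⟩ :=
    strictlyPositiveOn_laguerreFunctional.exists_gaussQuadrature isPreconnected_Ioi m
  have hmoment (k : ℕ) (hk : k < m) : ∑ x ∈ t, w x * x ^ k = k.factorial := by
    have := hexact (X ^ k) (by rw [degree_X_pow]; exact_mod_cast (by omega))
    simpa [laguerreFunctional_X_pow] using this.symm
  let e : t × Fin m ≃ Fin (m ^ 2) := Fintype.equivFinOfCardEq (by simp [ht, sq])
  let ζ : ℂ := exp (2 * Real.pi * I / m)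
  refine ⟨fun j => w (e.symm j).1 / m, fun j => √((e.symm j).1 : ℝ) * ζ ^ ((e.symm j).2 : ℕ),
    fun j => div_nonneg (hw _ (e.symm j).1.2).le m.cast_nonneg, fun k l hk hl => ?_⟩
  rw [← e.sum_comp]
  simp only [Equiv.symm_apply_apply]
  rw [sum_conj_pow_mul_pow_sqrt_mul_rootOfUnity (fun x : t => w x) (fun x : t => x)
    (fun x => (hts x.2).le) (isPrimitiveRoot_exp m (by omega)) hk hl]
  split_ifs with hkl
  · rw [sum_coe_sort t (fun x => w x * x ^ k), hmoment k hk]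
    norm_cast
  · rfl
end

section
/- For any n, d ∈ ℕ with N = (n+1)^{2d}, there exist vectors γ_1,…,γ_N ∈ ℂ^d and nonnegative weights p_1,…,p_N such that for all y ∈ ℂ^d: (|y_1|² + ⋯ + |y_d|²)^n = ∑_{i=1}^N p_i · |⟨γ_i, y⟩|^{2n}, i.e., a discrete complex spherical n-design of order at most (n+1)^{2d} exists. -/
open Polynomial Finset MeasureTheory Set

noncomputable section
namespace DesignAux

/-- moment functional -/
def phi (f : Polynomial ℝ) : ℝ := f.sum (fun m c => c * m.factorial)

lemma phi_monomial (m : ℕ) (c : ℝ) : phi (monomial m c) = c * m.factorial := by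
  simp [phi, Polynomial.sum_monomial_index]

lemma phi_add (f g : Polynomial ℝ) : phi (f + g) = phi f + phi g := by
  simp [phi, Polynomial.sum_add_index, add_mul]

lemma phi_C_mul (c : ℝ) (f : Polynomial ℝ) : phi (C c * f) = c * phi f := by
  induction f using Polynomial.induction_on' with
  | add p q hp hq => rw [mul_add, phi_add, phi_add, hp, hq, mul_add]
  | monomial m a => rw [C_mul_monomial, phi_monomial, phi_monomial]; ring

lemma integrableOn_mono_exp (m : ℕ) :
    IntegrableOn (fun x : ℝ => x ^ m * Real.exp (-x)) (Ioi 0) := by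
  have h := Real.GammaIntegral_convergent (s := m + 1) (by positivity)
  apply h.congr_fun ?_ measurableSet_Ioi
  intro x hx
  rw [Set.mem_Ioi] at hx
  show Real.exp (-x) * x ^ ((m:ℝ) + 1 - 1) = x ^ m * Real.exp (-x)
  rw [show ((m:ℝ) + 1 - 1) = (m:ℝ) by ring, Real.rpow_natCast]
  ring

lemma integral_monomial_exp (m : ℕ) :
    ∫ x in Ioi (0:ℝ), x ^ m * Real.exp (-x) = m.factorial := by
  have h := Real.Gamma_eq_integral (s := (m:ℝ) + 1) (by positivity)
  rw [Real.Gamma_nat_eq_factorial] at h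
  rw [h]
  apply setIntegral_congr_fun measurableSet_Ioi
  intro x hx
  rw [Set.mem_Ioi] at hx
  show x ^ m * Real.exp (-x) = Real.exp (-x) * x ^ ((m:ℝ) + 1 - 1)
  rw [show ((m:ℝ) + 1 - 1) = (m:ℝ) by ring, Real.rpow_natCast]
  ring

lemma integrableOn_poly_exp (f : Polynomial ℝ) :
    IntegrableOn (fun x : ℝ => f.eval x * Real.exp (-x)) (Ioi 0) := by
  induction f using Polynomial.induction_on' with
  | add p q hp hq =>
      apply MeasureTheory.IntegrableOn.congr_fun (hp.add hq) ?_ measurableSet_Ioi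
      intro x _; simp [add_mul]
  | monomial m c =>
      apply MeasureTheory.IntegrableOn.congr_fun ((integrableOn_mono_exp m).smul c) ?_ measurableSet_Ioi
      intro x _; simp; ring

lemma phi_eq_integral (f : Polynomial ℝ) :
    phi f = ∫ x in Ioi (0:ℝ), f.eval x * Real.exp (-x) := by
  induction f using Polynomial.induction_on' with
  | add p q hp hq =>
      rw [phi_add, hp, hq, ← integral_add (integrableOn_poly_exp p) (integrableOn_poly_exp q)]
      apply setIntegral_congr_fun measurableSet_Ioi
      intro x _; simp; ring
  | monomial m c =>
      rw [phi_monomial]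
      rw [show (∫ x in Ioi (0:ℝ), (monomial m c).eval x * Real.exp (-x))
            = ∫ x in Ioi (0:ℝ), c * (x ^ m * Real.exp (-x)) by
          apply setIntegral_congr_fun measurableSet_Ioi
          intro x _; simp; ring]
      rw [MeasureTheory.integral_const_mul, integral_monomial_exp]



lemma phi_nonneg (f : Polynomial ℝ) (h : ∀ x : ℝ, 0 < x → 0 ≤ f.eval x) : 0 ≤ phi f := by
  rw [phi_eq_integral]
  apply setIntegral_nonneg measurableSet_Ioi
  intro x hx
  exact mul_nonneg (h x hx) (Real.exp_pos _).le

lemma phi_pos (f : Polynomial ℝ) (hf : f ≠ 0) (h : ∀ x : ℝ, 0 < x → 0 ≤ f.eval x) :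
    0 < phi f := by
  rw [phi_eq_integral]
  rw [setIntegral_pos_iff_support_of_nonneg_ae ?_ (integrableOn_poly_exp f)]
  · apply lt_of_lt_of_le ?_ (measure_mono
      (show Ioi (0:ℝ) \ {x | f.IsRoot x} ⊆
        (Function.support fun x => f.eval x * Real.exp (-x)) ∩ Ioi 0 from ?_))
    · have hroots := (Polynomial.finite_setOf_isRoot hf).measure_zero (volume : Measure ℝ)
      have : volume (Ioi (0:ℝ) \ {x | f.IsRoot x}) = volume (Ioi (0:ℝ)) :=
        measure_diff_null hroots
      rw [this, Real.volume_Ioi]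
      exact ENNReal.zero_lt_top
    · rintro x ⟨hx1, hx2⟩
      refine ⟨?_, hx1⟩
      simp only [Function.mem_support]
      exact mul_ne_zero (fun hh => hx2 hh) (Real.exp_pos _).ne'
  · refine Filter.eventually_of_mem (self_mem_ae_restrict measurableSet_Ioi) ?_
    intro x hx
    exact mul_nonneg (h x hx) (Real.exp_pos _).le

/-- A nonzero real polynomial all of whose roots in `(0,∞)` have even multiplicity
has constant sign on `(0,∞)`. -/
lemma sign_const : ∀ (N : ℕ) (f : Polynomial ℝ), f.natDegree ≤ N → f ≠ 0 →
    (∀ r : ℝ, 0 < r → f.IsRoot r → Even (rootMultiplicity r f)) →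
    (∀ x : ℝ, 0 < x → 0 ≤ f.eval x) ∨ (∀ x : ℝ, 0 < x → f.eval x ≤ 0) := by
  intro N
  induction N with
  | zero =>
      intro f hdeg hf _
      rw [Nat.le_zero] at hdeg
      obtain ⟨c, rfl⟩ := natDegree_eq_zero.mp hdeg
      rcases le_total 0 c with hc | hc
      · exact Or.inl fun x _ => by simpa using hc
      · exact Or.inr fun x _ => by simpa using hc
  | succ N ih =>
      intro f hdeg hf heven
      by_contra hcon
      push_neg at hcon
      obtain ⟨⟨x₂, hx₂pos, hx₂'⟩, ⟨x₁, hx₁pos, hx₁'⟩⟩ := hcon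
      have hcont : ContinuousOn (fun x => f.eval x) (uIcc x₁ x₂) :=
        (Polynomial.continuous f).continuousOn
      have h0 : (0:ℝ) ∈ uIcc (f.eval x₁) (f.eval x₂) := by
        rw [Set.mem_uIcc]; right; exact ⟨hx₂'.le, hx₁'.le⟩
      obtain ⟨r, hr_mem, hr_root⟩ := intermediate_value_uIcc hcont h0
      have hrpos : 0 < r := by
        rcases Set.mem_uIcc.mp hr_mem with ⟨h1, _⟩ | ⟨h1, _⟩
        · exact lt_of_lt_of_le hx₁pos h1
        · exact lt_of_lt_of_le hx₂pos h1
      have hroot : f.IsRoot r := hr_root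
      set m := rootMultiplicity r f with hm
      have hmpos : 0 < m := (Polynomial.rootMultiplicity_pos hf).mpr hroot
      have hmeven : Even m := heven r hrpos hroot
      set g := f /ₘ (X - C r) ^ m with hg
      have hfg : (X - C r) ^ m * g = f := Polynomial.pow_mul_divByMonic_rootMultiplicity_eq f r
      have hgne : g ≠ 0 := by
        intro h0'
        rw [h0', mul_zero] at hfg
        exact hf hfg.symm
      have hgr : g.eval r ≠ 0 := Polynomial.eval_divByMonic_pow_rootMultiplicity_ne_zero r hf
      have hXr : ((X - C r) ^ m : Polynomial ℝ) ≠ 0 :=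
        pow_ne_zero _ (Polynomial.X_sub_C_ne_zero r)
      have hdeg_eq : f.natDegree = m + g.natDegree := by
        rw [← hfg, Polynomial.natDegree_mul hXr hgne]
        simp [Polynomial.natDegree_pow]
      have hgdeg : g.natDegree ≤ N := by omega
      have hgeven : ∀ s : ℝ, 0 < s → g.IsRoot s → Even (rootMultiplicity s g) := by
        intro s hs hsroot
        have hsr : s ≠ r := fun h => hgr (h ▸ hsroot)
        have hfs : f.IsRoot s := by
          rw [← hfg]
          simp [IsRoot, hsroot.eq_zero]
        have hmul : rootMultiplicity s ((X - C r) ^ m * g)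
            = rootMultiplicity s ((X - C r) ^ m) + rootMultiplicity s g :=
          Polynomial.rootMultiplicity_mul (by rw [hfg]; exact hf)
        have hz : rootMultiplicity s ((X - C r) ^ m) = 0 := by
          apply Polynomial.rootMultiplicity_eq_zero
          intro hh
          apply hsr
          have := hh.eq_zero
          rw [Polynomial.eval_pow] at this
          have h2 : Polynomial.eval s (X - C r) = 0 := by
            rcases pow_eq_zero_iff hmpos.ne' |>.mp this with h
            exact h
          simpa [sub_eq_zero] using h2
        have := heven s hs hfs
        rw [← hfg, hmul, hz, zero_add] at this
        exact this
      have hpow : ∀ x : ℝ, x ≠ r → 0 < ((X - C r) ^ m : Polynomial ℝ).eval x := by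
        intro x hxr
        rw [Polynomial.eval_pow]
        simp only [Polynomial.eval_sub, Polynomial.eval_X, Polynomial.eval_C]
        exact hmeven.pow_pos (sub_ne_zero.mpr hxr)
      have hx₁r : x₁ ≠ r := fun h => by
        rw [h, hroot.eq_zero] at hx₁'; exact lt_irrefl _ hx₁'
      have hx₂r : x₂ ≠ r := fun h => by
        rw [h, hroot.eq_zero] at hx₂'; exact lt_irrefl _ hx₂'
      have hev₁ : f.eval x₁ = ((X - C r) ^ m : Polynomial ℝ).eval x₁ * g.eval x₁ := by
        rw [← hfg, Polynomial.eval_mul]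
      have hev₂ : f.eval x₂ = ((X - C r) ^ m : Polynomial ℝ).eval x₂ * g.eval x₂ := by
        rw [← hfg, Polynomial.eval_mul]
      have hg₁ : 0 < g.eval x₁ := by
        by_contra hle
        push_neg at hle
        have := mul_nonpos_of_nonneg_of_nonpos (hpow x₁ hx₁r).le hle
        rw [← hev₁] at this
        exact absurd hx₁' (not_lt.mpr this)
      have hg₂ : g.eval x₂ < 0 := by
        by_contra hle
        push_neg at hle
        have := mul_nonneg (hpow x₂ hx₂r).le hle
        rw [← hev₂] at this
        exact absurd hx₂' (not_lt.mpr this)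
      rcases ih g hgdeg hgne hgeven with hcase | hcase
      · exact absurd (hcase x₂ hx₂pos) (not_le.mpr hg₂)
      · exact absurd (hcase x₁ hx₁pos) (not_le.mpr hg₁)




/-- phi as a linear map. -/
def philm : Polynomial ℝ →ₗ[ℝ] ℝ where
  toFun := phi
  map_add' := phi_add
  map_smul' := fun c f => by
    simp only [RingHom.id_apply, smul_eq_mul]
    rw [Polynomial.smul_eq_C_mul, phi_C_mul]

lemma phi_sum {ι : Type*} (s : Finset ι) (f : ι → Polynomial ℝ) :
    phi (∑ i ∈ s, f i) = ∑ i ∈ s, phi (f i) := map_sum philm f s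

lemma phi_X_pow (j : ℕ) : phi (X ^ j) = j.factorial := by
  rw [X_pow_eq_monomial, phi_monomial, one_mul]

lemma phi_sq_nonneg (f : Polynomial ℝ) : 0 ≤ phi (f * f) := by
  apply phi_nonneg
  intro x _
  rw [Polynomial.eval_mul]
  exact mul_self_nonneg _

theorem exists_quadrature (n : ℕ) :
    ∃ (t w : Fin (n+1) → ℝ), (∀ i, 0 < t i) ∧ (∀ i, 0 ≤ w i) ∧
      ∀ j : ℕ, j ≤ n → ∑ i, w i * t i ^ j = (j.factorial : ℝ) := by
  classical
  -- an orthogonal polynomial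
  set M : Matrix (Fin (n+1)) (Fin (n+2)) ℝ :=
    fun m k => (((m:ℕ) + (k:ℕ)).factorial : ℝ) with hM
  have hninj : ¬ Function.Injective M.mulVecLin := by
    intro h
    have := LinearMap.finrank_le_finrank_of_injective h
    rw [Module.finrank_fin_fun, Module.finrank_fin_fun] at this
    omega
  obtain ⟨a, b, hab, hne⟩ := Function.not_injective_iff.mp hninj
  set v : Fin (n+2) → ℝ := a - b with hv
  have hv0 : v ≠ 0 := sub_ne_zero.mpr hne
  have hLv : M.mulVec v = 0 := by
    have : M.mulVecLin (a - b) = 0 := by rw [map_sub, hab, sub_self]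
    simpa using this
  have hLv' : ∀ m : Fin (n+1), ∑ k : Fin (n+2), (((m:ℕ) + (k:ℕ)).factorial : ℝ) * v k = 0 := by
    intro m
    have := congrFun hLv m
    simpa [Matrix.mulVec, dotProduct, hM] using this
  set P : Polynomial ℝ := ∑ k : Fin (n+2), C (v k) * X ^ (k:ℕ) with hP
  have hPcoeff : ∀ N : ℕ, P.coeff N = if h : N < n + 2 then v ⟨N, h⟩ else 0 := by
    intro N
    rw [hP, Polynomial.finset_sum_coeff]
    simp only [Polynomial.coeff_C_mul, Polynomial.coeff_X_pow]
    by_cases h : N < n + 2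
    · rw [dif_pos h]
      rw [Finset.sum_eq_single (⟨N, h⟩ : Fin (n+2))]
      · simp
      · intro k _ hk
        have : (k:ℕ) ≠ N := fun hh => hk (by ext; simp [hh])
        simp [Ne.symm this]
      · simp
    · rw [dif_neg h]
      apply Finset.sum_eq_zero
      intro k _
      have : (k:ℕ) ≠ N := by omega
      simp [Ne.symm this]
  have hPne : P ≠ 0 := by
    intro h0
    apply hv0
    funext k
    have := hPcoeff k
    rw [h0] at this
    simp only [Polynomial.coeff_zero] at this
    rw [dif_pos k.isLt] at this
    simpa using this.symm
  have hPdeg : P.natDegree ≤ n + 1 := by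
    rw [Polynomial.natDegree_le_iff_coeff_eq_zero]
    intro N hN
    rw [hPcoeff N, dif_neg (by omega)]
  -- orthogonality against monomials
  have horthoX : ∀ m : ℕ, m ≤ n → phi (P * X ^ m) = 0 := by
    intro m hm
    have : P * X ^ m = ∑ k : Fin (n+2), C (v k) * X ^ ((k:ℕ) + m) := by
      rw [hP, Finset.sum_mul]
      exact Finset.sum_congr rfl fun k _ => by rw [mul_assoc, ← pow_add]
    rw [this, phi_sum]
    have := hLv' ⟨m, by omega⟩
    rw [← this]
    apply Finset.sum_congr rfl
    intro k _
    rw [phi_C_mul, phi_X_pow]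
    ring_nf
  -- orthogonality against all polynomials of degree ≤ n
  have hortho : ∀ q : Polynomial ℝ, q.natDegree ≤ n → phi (P * q) = 0 := by
    intro q hq
    have hq' : q = ∑ i ∈ Finset.range (n+1), C (q.coeff i) * X ^ i := by
      conv_lhs => rw [Polynomial.as_sum_range' q (n+1) (by omega)]
      exact Finset.sum_congr rfl fun i _ => by rw [Polynomial.C_mul_X_pow_eq_monomial]
    rw [hq', Finset.mul_sum, phi_sum]
    apply Finset.sum_eq_zero
    intro i hi
    have : P * (C (q.coeff i) * X ^ i) = C (q.coeff i) * (P * X ^ i) := by ring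
    rw [this, phi_C_mul, horthoX i (by simp at hi; omega), mul_zero]
  have hdegP : P.natDegree = n + 1 := by
    by_contra hne'
    have hle : P.natDegree ≤ n := by omega
    have := hortho P hle
    have hpos := phi_pos (P * P) (mul_ne_zero hPne hPne)
      (fun x _ => by rw [Polynomial.eval_mul]; exact mul_self_nonneg _)
    rw [this] at hpos
    exact lt_irrefl _ hpos
  -- the set of positive odd-multiplicity roots
  set T : Finset ℝ := P.roots.toFinset.filter
    (fun r => 0 < r ∧ Odd (rootMultiplicity r P)) with hT
  have hTpos : ∀ r ∈ T, 0 < r := by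
    intro r hr
    rw [hT, Finset.mem_filter] at hr
    exact hr.2.1
  have hTroot : ∀ r ∈ T, P.IsRoot r := by
    intro r hr
    rw [hT, Finset.mem_filter, Multiset.mem_toFinset] at hr
    exact (Polynomial.mem_roots hPne).mp hr.1
  have hTodd : ∀ r ∈ T, Odd (rootMultiplicity r P) := by
    intro r hr
    rw [hT, Finset.mem_filter] at hr
    exact hr.2.2
  have hTcard_le : T.card ≤ n + 1 := by
    calc T.card ≤ P.roots.toFinset.card := Finset.card_filter_le _ _
    _ ≤ Multiset.card P.roots := Multiset.toFinset_card_le _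
    _ ≤ P.natDegree := Polynomial.card_roots' P
    _ = n + 1 := hdegP
  have hTcard : T.card = n + 1 := by
    by_contra hne'
    have hTn : T.card ≤ n := by omega
    set Q : Polynomial ℝ := ∏ r ∈ T, (X - C r) with hQ
    have hQne : Q ≠ 0 := by
      rw [hQ]
      exact Finset.prod_ne_zero_iff.mpr fun r _ => Polynomial.X_sub_C_ne_zero r
    have hQdeg : Q.natDegree = T.card := by
      rw [hQ, Polynomial.natDegree_prod _ _ (fun r _ => Polynomial.X_sub_C_ne_zero r)]
      simp [Polynomial.natDegree_X_sub_C]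
    have hQroots : Q.roots = T.val := by
      rw [hQ]; exact Polynomial.roots_prod_X_sub_C T
    have hQmult : ∀ r : ℝ, rootMultiplicity r Q = if r ∈ T then 1 else 0 := by
      intro r
      rw [← Polynomial.count_roots, hQroots]
      by_cases hmem : r ∈ T
      · rw [if_pos hmem]
        exact Multiset.count_eq_one_of_mem T.nodup hmem
      · rw [if_neg hmem]
        exact Multiset.count_eq_zero.mpr hmem
    have hPQne : P * Q ≠ 0 := mul_ne_zero hPne hQne
    have heven : ∀ r : ℝ, 0 < r → (P * Q).IsRoot r → Even (rootMultiplicity r (P * Q)) := by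
      intro r hrpos _
      rw [Polynomial.rootMultiplicity_mul hPQne, hQmult r]
      by_cases hmem : r ∈ T
      · rw [if_pos hmem]
        exact (hTodd r hmem).add_one
      · rw [if_neg hmem, add_zero]
        by_cases hroot : P.IsRoot r
        · have hmem' : r ∈ P.roots.toFinset := by
            rw [Multiset.mem_toFinset, Polynomial.mem_roots hPne]
            exact hroot
          have : ¬ Odd (rootMultiplicity r P) := by
            intro hodd
            exact hmem (by rw [hT, Finset.mem_filter]; exact ⟨hmem', hrpos, hodd⟩)
          exact Nat.not_odd_iff_even.mp this
        · rw [Polynomial.rootMultiplicity_eq_zero hroot]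
          exact Even.zero
    have hPQ0 : phi (P * Q) = 0 := hortho Q (by omega)
    rcases sign_const ((P * Q).natDegree) (P * Q) le_rfl hPQne heven with hsgn | hsgn
    · have := phi_pos (P * Q) hPQne hsgn
      rw [hPQ0] at this
      exact lt_irrefl _ this
    · have hneg : phi (-(P * Q)) = 0 := by
        rw [show -(P * Q) = C (-1) * (P * Q) by simp, phi_C_mul, hPQ0, mul_zero]
      have := phi_pos (-(P * Q)) (neg_ne_zero.mpr hPQne)
        (fun x hx => by rw [Polynomial.eval_neg]; linarith [hsgn x hx])
      rw [hneg] at this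
      exact lt_irrefl _ this
  -- nodal polynomial
  set Npoly : Polynomial ℝ := ∏ r ∈ T, (X - C r) with hNp
  have hNroots : T.val ≤ P.roots := by
    rw [Multiset.le_iff_count]
    intro r
    by_cases hmem : r ∈ T
    · rw [Multiset.count_eq_one_of_mem T.nodup hmem, Polynomial.count_roots]
      exact (Polynomial.rootMultiplicity_pos hPne).mpr (hTroot r hmem)
    · rw [Multiset.count_eq_zero.mpr hmem]
      omega
  have hNne : Npoly ≠ 0 := by
    rw [hNp]
    exact Finset.prod_ne_zero_iff.mpr fun r _ => Polynomial.X_sub_C_ne_zero r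
  have hNdeg : Npoly.natDegree = n + 1 := by
    rw [hNp, Polynomial.natDegree_prod _ _ (fun r _ => Polynomial.X_sub_C_ne_zero r)]
    simp [Polynomial.natDegree_X_sub_C, hTcard]
  have hNdvd : Npoly ∣ P := by
    have h1 : (T.val.map fun a => X - C a).prod ∣ P :=
      (Multiset.prod_X_sub_C_dvd_iff_le_roots hPne T.val).mpr hNroots
    rw [hNp, Finset.prod_eq_multiset_prod]
    exact h1
  obtain ⟨cq, hcq⟩ := hNdvd
  have hcqne : cq ≠ 0 := fun h => hPne (by rw [hcq, h, mul_zero])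
  have hcqdeg : cq.natDegree = 0 := by
    have h2 := hdegP
    rw [hcq, Polynomial.natDegree_mul hNne hcqne, hNdeg] at h2
    omega
  obtain ⟨c0, hc0⟩ := Polynomial.natDegree_eq_zero.mp hcqdeg
  have hc0ne : c0 ≠ 0 := by
    intro h
    rw [h, map_zero] at hc0
    exact hcqne hc0.symm
  have horthoN : ∀ q : Polynomial ℝ, q.natDegree ≤ n → phi (Npoly * q) = 0 := by
    intro q hq
    have h1 : P * q = C c0 * (Npoly * q) := by rw [hcq, ← hc0]; ring
    have h2 := hortho q hq
    rw [h1, phi_C_mul] at h2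
    exact (mul_eq_zero.mp h2).resolve_left hc0ne
  -- Lagrange interpolation weights
  have hinjOn : Set.InjOn id (T : Set ℝ) := Function.injective_id.injOn
  have hBdeg : ∀ i ∈ T, (Lagrange.basis T id i).natDegree = n := by
    intro i hi
    rw [Lagrange.natDegree_basis hinjOn hi, hTcard]
    omega
  have hwnonneg : ∀ i ∈ T, 0 ≤ phi (Lagrange.basis T id i) := by
    intro i hi
    set B := Lagrange.basis T id i with hB
    set g := B * B - B with hg
    have hgroot : ∀ r ∈ T, g.eval r = 0 := by
      intro r hr
      rw [hg]
      simp only [Polynomial.eval_sub, Polynomial.eval_mul]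
      by_cases hri : r = i
      · subst hri
        have := Lagrange.eval_basis_self hinjOn hr
        simp only [id] at this
        rw [hB, this]; ring
      · have := Lagrange.eval_basis_of_ne (s := T) (v := id) (i := i) (j := r)
          (fun h => hri h.symm) hr
        simp only [id] at this
        rw [hB, this]; ring
    have hphig : phi g = 0 := by
      by_cases hg0 : g = 0
      · rw [hg0]
        have : phi 0 = 0 := by
          have := phi_C_mul 0 0
          simpa using this
        exact this
      · have hroots : T.val ≤ g.roots := by
          rw [Multiset.le_iff_count]
          intro r
          by_cases hmem : r ∈ T
          · rw [Multiset.count_eq_one_of_mem T.nodup hmem, Polynomial.count_roots]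
            exact (Polynomial.rootMultiplicity_pos hg0).mpr (hgroot r hmem)
          · rw [Multiset.count_eq_zero.mpr hmem]
            omega
        have hdvd : Npoly ∣ g := by
          have h1 : (T.val.map fun a => X - C a).prod ∣ g :=
            (Multiset.prod_X_sub_C_dvd_iff_le_roots hg0 T.val).mpr hroots
          rw [hNp, Finset.prod_eq_multiset_prod]
          exact h1
        obtain ⟨q, hq⟩ := hdvd
        have hqne : q ≠ 0 := fun h => hg0 (by rw [hq, h, mul_zero])
        have hgdeg : g.natDegree ≤ 2 * n := by
          rw [hg]
          apply le_trans (Polynomial.natDegree_sub_le _ _)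
          apply max_le
          · apply le_trans (Polynomial.natDegree_mul_le)
            rw [hBdeg i hi]; omega
          · rw [hBdeg i hi]; omega
        have hqdeg : q.natDegree ≤ n := by
          have h2 := hgdeg
          rw [hq, Polynomial.natDegree_mul hNne hqne, hNdeg] at h2
          omega
        rw [hq]
        exact horthoN q hqdeg
      -- done with phi g
    have h3 : B * B = g + B := by rw [hg]; ring
    have h4 := phi_sq_nonneg B
    rw [h3, phi_add, hphig, zero_add] at h4
    exact h4
  -- exactness
  have hexact : ∀ f : Polynomial ℝ, f.degree < (n+1 : ℕ) →
      phi f = ∑ r ∈ T, f.eval r * phi (Lagrange.basis T id r) := by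
    intro f hdegf
    have hfi : f = Lagrange.interpolate T id (fun i => f.eval (id i)) :=
      Lagrange.eq_interpolate hinjOn (by rw [hTcard]; exact hdegf)
    conv_lhs => rw [hfi]
    rw [Lagrange.interpolate_apply, phi_sum]
    apply Finset.sum_congr rfl
    intro r hr
    rw [phi_C_mul]
    rfl
  -- package
  have hcardT : Fintype.card T = n + 1 := by rw [Fintype.card_coe, hTcard]
  set e := Fintype.equivFinOfCardEq hcardT with he
  refine ⟨fun i => ((e.symm i : T) : ℝ), fun i => phi (Lagrange.basis T id ((e.symm i : T) : ℝ)),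
    ?_, ?_, ?_⟩
  · intro i
    exact hTpos _ (e.symm i).2
  · intro i
    exact hwnonneg _ (e.symm i).2
  · intro j hj
    have hX : Polynomial.degree ((X : Polynomial ℝ) ^ j) < (n+1 : ℕ) := by
      rw [Polynomial.degree_X_pow]
      exact_mod_cast Nat.lt_succ_of_le hj
    have h1 := hexact (X ^ j) hX
    rw [phi_X_pow] at h1
    rw [h1]
    rw [← Finset.sum_coe_sort T (fun r => Polynomial.eval r ((X : Polynomial ℝ) ^ j) * phi (Lagrange.basis T id r))]
    rw [← Equiv.sum_comp e.symm
      (fun x : T => Polynomial.eval (x:ℝ) ((X : Polynomial ℝ) ^ j) * phi (Lagrange.basis T id (x : ℝ)))]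
    apply Finset.sum_congr rfl
    intro i _
    simp only [Polynomial.eval_pow, Polynomial.eval_X]
    ring





/-- Design predicate: mixed moments up to order `n`. -/
def IsDesign (n d : ℕ) {ι : Type} [Fintype ι] (γ : ι → Fin d → ℂ) (p : ι → ℝ) : Prop :=
  (∀ i, 0 ≤ p i) ∧ ∀ s t : ℕ, s ≤ n → t ≤ n → ∀ y : Fin d → ℂ,
    ∑ i, (p i : ℂ) * (∑ j, (starRingEnd ℂ) (γ i j) * y j) ^ s *
      ((starRingEnd ℂ) (∑ j, (starRingEnd ℂ) (γ i j) * y j)) ^ t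
    = if s = t then (s.factorial : ℂ) * (((∑ j, ‖y j‖ ^ 2 : ℝ)) : ℂ) ^ s else 0

theorem design_exists (n : ℕ) :
    ∀ d : ℕ, ∃ (ι : Type) (_i : Fintype ι) (γ : ι → Fin d → ℂ) (p : ι → ℝ),
      Fintype.card ι = (n+1)^(2*d) ∧ IsDesign n d γ p := by
  intro d
  induction d with
  | zero =>
      refine ⟨PUnit, inferInstance, fun _ => Fin.elim0, fun _ => 1, by simp, fun _ => zero_le_one, ?_⟩
      intro s t hs ht y
      have hy : ∀ (f : Fin 0 → ℂ), ∑ j, f j = 0 := fun f => by simp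
      have hy2 : (∑ j : Fin 0, ‖y j‖ ^ 2) = 0 := by simp
      simp only [hy, hy2, map_zero]
      rcases Nat.eq_zero_or_pos s with hs0 | hs0 <;> rcases Nat.eq_zero_or_pos t with ht0 | ht0
      · subst hs0; subst ht0; simp
      · subst hs0
        rw [if_neg (by omega)]
        simp [zero_pow (by omega : t ≠ 0)]
      · subst ht0
        rw [if_neg (by omega)]
        simp [zero_pow (by omega : s ≠ 0)]
      · rw [zero_pow (by omega : s ≠ 0)]
        simp only [Complex.ofReal_zero, zero_pow (by omega : s ≠ 0)]
        by_cases hst : s = t <;> simp [hst]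
  | succ d IH =>
      obtain ⟨ι, instι, γ, p, hcard, hpos, hdes⟩ := IH
      obtain ⟨tq, wq, htq, hwq, hquad⟩ := exists_quadrature n
      obtain ⟨ω, hprim⟩ : ∃ ω : ℂ, IsPrimitiveRoot ω (n+1) :=
        ⟨_, Complex.isPrimitiveRoot_exp _ (by omega)⟩
      have habs : ‖ω‖ = 1 := by
        have := Complex.norm_eq_one_of_pow_eq_one hprim.pow_eq_one (by omega : n+1 ≠ 0)
        simpa using this
      have hu : (starRingEnd ℂ) ω * ω = 1 := by
        rw [mul_comm, Complex.mul_conj, Complex.normSq_eq_norm_sq, habs]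
        norm_num
      have hphase : ∀ j j' : ℕ, j ≤ n → j' ≤ n →
          ∑ r : Fin (n+1), (((starRingEnd ℂ) ω)^j * ω^j') ^ (r : ℕ)
            = if j = j' then ((n+1 : ℕ) : ℂ) else 0 := by
        intro j j' hj hj'
        rw [Fin.sum_univ_eq_sum_range (fun m => (((starRingEnd ℂ) ω)^j * ω^j') ^ m) (n+1)]
        by_cases h : j = j'
        · subst h
          rw [if_pos rfl, ← mul_pow, hu, one_pow]
          simp
        · rw [if_neg h]
          have hj3 : ((starRingEnd ℂ) ω)^j * ω^j ≠ 0 → True := fun _ => trivial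
          have hmain : (((starRingEnd ℂ) ω)^j * ω^j') ^ (n+1) = 1 := by
            rw [mul_pow, ← pow_mul, ← pow_mul, Nat.mul_comm j (n+1), Nat.mul_comm j' (n+1),
              pow_mul, pow_mul, ← map_pow, hprim.pow_eq_one, map_one, one_pow, one_pow, one_mul]
          have hne1 : ((starRingEnd ℂ)) ω ^ j * ω ^ j' ≠ 1 := by
            intro h1
            have h3 : ((starRingEnd ℂ) ω)^j * ω^j = 1 := by rw [← mul_pow, hu, one_pow]
            have h4 : ω ^ j' = ω ^ j := by
              calc ω ^ j' = (((starRingEnd ℂ) ω)^j * ω^j) * ω ^ j' := by rw [h3, one_mul]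
              _ = (((starRingEnd ℂ) ω)^j * ω^j') * ω ^ j := by ring
              _ = ω ^ j := by rw [h1, one_mul]
            exact h (hprim.pow_inj (by omega) (by omega) h4.symm)
          rw [geom_sum_eq hne1, hmain, sub_self, zero_div]
      -- the new design
      refine ⟨ι × Fin (n+1) × Fin (n+1), inferInstance,
        (fun x => Fin.cons (((Real.sqrt (tq x.2.1) : ℝ) : ℂ) * ω ^ ((x.2.2 : Fin (n+1)) : ℕ)) (γ x.1)),
        (fun x => p x.1 * wq x.2.1 / ((n:ℝ)+1)), ?_, ?_, ?_⟩
      · simp only [Fintype.card_prod, Fintype.card_fin, hcard]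
        rw [show 2*(d+1) = 2*d + 1 + 1 by ring, pow_succ, pow_succ]
        ring
      · intro x
        exact div_nonneg (mul_nonneg (hpos x.1) (hwq x.2.1)) (by positivity)
      · intro s t hs ht y
        set y0 : ℂ := y 0 with hy0
        set Sold : ι → ℂ := fun i => ∑ j, (starRingEnd ℂ) (γ i j) * (Fin.tail y) j with hSold
        set Cold : ι → ℂ := fun i => (starRingEnd ℂ) (Sold i) with hCold
        set A : Fin (n+1) → ℂ := fun k => ((Real.sqrt (tq k) : ℝ) : ℂ) with hA
        set u : ℂ := (starRingEnd ℂ) ω with hudef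
        have hnne : ((n:ℂ)+1) ≠ 0 := by
          have : ((n+1:ℕ):ℂ) ≠ 0 := Nat.cast_ne_zero.mpr (by omega)
          push_cast at this
          exact this
        have hA2 : ∀ k, A k * A k = ((tq k : ℝ) : ℂ) := by
          intro k
          rw [hA]
          rw [← Complex.ofReal_mul, Real.mul_self_sqrt (htq k).le]
        have hS : ∀ (i : ι) (k r : Fin (n+1)),
            (∑ j : Fin (d+1), (starRingEnd ℂ)
              ((Fin.cons (A k * ω ^ (r:ℕ)) (γ i) : Fin (d+1) → ℂ) j) * y j)
            = A k * u ^ (r:ℕ) * y0 + Sold i := by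
          intro i k r
          rw [Fin.sum_univ_succ]
          have h1 : (starRingEnd ℂ) ((Fin.cons (A k * ω ^ (r:ℕ)) (γ i) : Fin (d+1) → ℂ) 0) * y 0
              = A k * u ^ (r:ℕ) * y0 := by
            rw [Fin.cons_zero, map_mul, map_pow,
              show (starRingEnd ℂ) (A k) = A k from Complex.conj_ofReal _, ← hudef]
          rw [h1]
          congr 1
        have hCS : ∀ (i : ι) (k r : Fin (n+1)),
            (starRingEnd ℂ) (A k * u ^ (r:ℕ) * y0 + Sold i)
            = A k * ω ^ (r:ℕ) * (starRingEnd ℂ) y0 + Cold i := by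
          intro i k r
          rw [map_add, map_mul, map_mul, map_pow, hCold]
          rw [show (starRingEnd ℂ) (A k) = A k from Complex.conj_ofReal _]
          rw [hudef, Complex.conj_conj]
        -- inner sum over phases
        have key : ∀ (i : ι) (k : Fin (n+1)),
            ∑ r : Fin (n+1), (A k * u ^ (r:ℕ) * y0 + Sold i)^s
                * (A k * ω ^ (r:ℕ) * (starRingEnd ℂ) y0 + Cold i)^t
            = ((n:ℂ)+1) * ∑ j ∈ range (s+1), (if j ∈ range (t+1) then
                (Nat.choose s j : ℂ) * (Nat.choose t j : ℂ) * ((tq k : ℝ) : ℂ)^j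
                  * ((‖y0‖ ^ 2 : ℝ) : ℂ)^j * Sold i^(s-j) * Cold i^(t-j)
              else 0) := by
          intro i k
          have hexp : ∀ r : Fin (n+1),
              (A k * u ^ (r:ℕ) * y0 + Sold i)^s
                * (A k * ω ^ (r:ℕ) * (starRingEnd ℂ) y0 + Cold i)^t
              = ∑ j ∈ range (s+1), ∑ j' ∈ range (t+1),
                  ((A k)^(j+j') * y0^j * ((starRingEnd ℂ) y0)^(j') * Sold i^(s-j)
                    * Cold i^(t-j') * (Nat.choose s j : ℂ) * (Nat.choose t j' : ℂ))
                    * ((u^j * ω^(j'))^(r:ℕ)) := by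
            intro r
            rw [add_pow, add_pow, Finset.sum_mul_sum]
            apply Finset.sum_congr rfl
            intro j _
            apply Finset.sum_congr rfl
            intro j' _
            ring
          rw [Finset.sum_congr rfl (fun r _ => hexp r)]
          rw [Finset.sum_comm]
          rw [Finset.mul_sum]
          apply Finset.sum_congr rfl
          intro j hj
          rw [Finset.sum_comm]
          have hjn : j ≤ n := by
            simp only [Finset.mem_range] at hj
            omega
          have hstep : ∀ j' ∈ range (t+1),
              (∑ r : Fin (n+1),
                ((A k)^(j+j') * y0^j * ((starRingEnd ℂ) y0)^(j') * Sold i^(s-j)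
                  * Cold i^(t-j') * (Nat.choose s j : ℂ) * (Nat.choose t j' : ℂ))
                  * ((u^j * ω^(j'))^(r:ℕ)))
              = if j = j' then
                  ((A k)^(j+j') * y0^j * ((starRingEnd ℂ) y0)^(j') * Sold i^(s-j)
                    * Cold i^(t-j') * (Nat.choose s j : ℂ) * (Nat.choose t j' : ℂ))
                    * ((n:ℂ)+1)
                else 0 := by
            intro j' hj'
            have hj'n : j' ≤ n := by
              simp only [Finset.mem_range] at hj'
              omega
            rw [← Finset.mul_sum, hphase j j' hjn hj'n]
            push_cast
            rw [mul_ite, mul_zero]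
          rw [Finset.sum_congr rfl hstep]
          rw [Finset.sum_ite_eq (range (t+1)) j]
          by_cases hmem : j ∈ range (t+1)
          · rw [if_pos hmem, if_pos hmem]
            have hAA : (A k)^(j+j) = ((tq k : ℝ) : ℂ)^j := by
              rw [pow_add, ← hA2 k, mul_pow]
            have hyy : y0^j * ((starRingEnd ℂ) y0)^j = ((‖y0‖ ^ 2 : ℝ) : ℂ)^j := by
              rw [← mul_pow, Complex.mul_conj, Complex.normSq_eq_norm_sq]
            calc ((A k)^(j+j) * y0^j * ((starRingEnd ℂ) y0)^(j) * Sold i^(s-j)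
                  * Cold i^(t-j) * (Nat.choose s j : ℂ) * (Nat.choose t j : ℂ)) * ((n:ℂ)+1)
                = ((n:ℂ)+1) * (((A k)^(j+j)) * (y0^j * ((starRingEnd ℂ) y0)^j)
                    * Sold i^(s-j) * Cold i^(t-j) * (Nat.choose s j : ℂ)
                    * (Nat.choose t j : ℂ)) := by ring
              _ = ((n:ℂ)+1) * ((Nat.choose s j : ℂ) * (Nat.choose t j : ℂ)
                    * ((tq k : ℝ) : ℂ)^j * ((‖y0‖ ^ 2 : ℝ) : ℂ)^j
                    * Sold i^(s-j) * Cold i^(t-j)) := by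
                  rw [hAA, hyy]
                  ring
          · rw [if_neg hmem, if_neg hmem, mul_zero]
        -- abbreviations
        set Xc : ℂ := ((‖y0‖ ^ 2 : ℝ) : ℂ) with hXc
        set Yc : ℂ := ((∑ j' : Fin d, ‖Fin.tail y j'‖ ^ 2 : ℝ) : ℂ) with hYc
        have hcancel : ∀ a b Z : ℂ, a * b * ((n:ℂ)+1)⁻¹ * (((n:ℂ)+1) * Z) = a * b * Z := by
          intro a b Z
          field_simp
        have hqC : ∀ j : ℕ, j ≤ n →
            ∑ k : Fin (n+1), (wq k : ℂ) * ((tq k : ℝ) : ℂ)^j = (j.factorial : ℂ) := by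
          intro j hj
          have h0 := hquad j hj
          calc ∑ k : Fin (n+1), (wq k : ℂ) * ((tq k : ℝ) : ℂ)^j
              = ((∑ k : Fin (n+1), wq k * tq k ^ j : ℝ) : ℂ) := by push_cast; rfl
          _ = ((j.factorial : ℝ) : ℂ) := by rw [h0]
          _ = (j.factorial : ℂ) := by push_cast; rfl
        have main : (∑ x : ι × Fin (n+1) × Fin (n+1),
              (↑(p x.1 * wq x.2.1 / ((n:ℝ)+1)) : ℂ) *
              (∑ j : Fin (d+1), (starRingEnd ℂ)
                ((Fin.cons (A x.2.1 * ω ^ ((x.2.2 : Fin (n+1)) : ℕ)) (γ x.1) : Fin (d+1) → ℂ) j)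
                  * y j)^s *
              ((starRingEnd ℂ) (∑ j : Fin (d+1), (starRingEnd ℂ)
                ((Fin.cons (A x.2.1 * ω ^ ((x.2.2 : Fin (n+1)) : ℕ)) (γ x.1) : Fin (d+1) → ℂ) j)
                  * y j))^t)
            = if s = t then (s.factorial : ℂ)
                * (((∑ j : Fin (d+1), ‖y j‖ ^ 2 : ℝ)) : ℂ) ^ s else 0 := by
          calc (∑ x : ι × Fin (n+1) × Fin (n+1),
              (↑(p x.1 * wq x.2.1 / ((n:ℝ)+1)) : ℂ) *
              (∑ j : Fin (d+1), (starRingEnd ℂ)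
                ((Fin.cons (A x.2.1 * ω ^ ((x.2.2 : Fin (n+1)) : ℕ)) (γ x.1) : Fin (d+1) → ℂ) j)
                  * y j)^s *
              ((starRingEnd ℂ) (∑ j : Fin (d+1), (starRingEnd ℂ)
                ((Fin.cons (A x.2.1 * ω ^ ((x.2.2 : Fin (n+1)) : ℕ)) (γ x.1) : Fin (d+1) → ℂ) j)
                  * y j))^t)
              = ∑ i : ι, ∑ kr : Fin (n+1) × Fin (n+1),
                  (↑(p i * wq kr.1 / ((n:ℝ)+1)) : ℂ) *
                  (∑ j : Fin (d+1), (starRingEnd ℂ)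
                    ((Fin.cons (A kr.1 * ω ^ ((kr.2 : Fin (n+1)) : ℕ)) (γ i) : Fin (d+1) → ℂ) j)
                      * y j)^s *
                  ((starRingEnd ℂ) (∑ j : Fin (d+1), (starRingEnd ℂ)
                    ((Fin.cons (A kr.1 * ω ^ ((kr.2 : Fin (n+1)) : ℕ)) (γ i) : Fin (d+1) → ℂ) j)
                      * y j))^t := by rw [Fintype.sum_prod_type]
          _ = ∑ i : ι, ∑ k : Fin (n+1), ∑ r : Fin (n+1),
                  (↑(p i * wq k / ((n:ℝ)+1)) : ℂ) *
                  (∑ j : Fin (d+1), (starRingEnd ℂ)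
                    ((Fin.cons (A k * ω ^ ((r : Fin (n+1)) : ℕ)) (γ i) : Fin (d+1) → ℂ) j)
                      * y j)^s *
                  ((starRingEnd ℂ) (∑ j : Fin (d+1), (starRingEnd ℂ)
                    ((Fin.cons (A k * ω ^ ((r : Fin (n+1)) : ℕ)) (γ i) : Fin (d+1) → ℂ) j)
                      * y j))^t :=
              Finset.sum_congr rfl (fun i _ => by rw [Fintype.sum_prod_type])
          _ = ∑ i : ι, ∑ k : Fin (n+1), ∑ r : Fin (n+1),
                  (p i : ℂ) * (wq k : ℂ) * ((n:ℂ)+1)⁻¹ *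
                  ((A k * u ^ (r:ℕ) * y0 + Sold i)^s
                    * (A k * ω ^ (r:ℕ) * (starRingEnd ℂ) y0 + Cold i)^t) := by
              apply Finset.sum_congr rfl
              intro i _
              apply Finset.sum_congr rfl
              intro k _
              apply Finset.sum_congr rfl
              intro r _
              rw [hS i k r, hCS i k r]
              push_cast
              ring
          _ = ∑ i : ι, ∑ k : Fin (n+1),
                  (p i : ℂ) * (wq k : ℂ) * ((n:ℂ)+1)⁻¹ *
                  (((n:ℂ)+1) * ∑ j ∈ range (s+1), (if j ∈ range (t+1) then
                    (Nat.choose s j : ℂ) * (Nat.choose t j : ℂ) * ((tq k : ℝ) : ℂ)^j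
                      * Xc^j * Sold i^(s-j) * Cold i^(t-j) else 0)) := by
              apply Finset.sum_congr rfl
              intro i _
              apply Finset.sum_congr rfl
              intro k _
              rw [← Finset.mul_sum, key i k]
          _ = ∑ i : ι, ∑ k : Fin (n+1),
                  (p i : ℂ) * (wq k : ℂ) *
                  (∑ j ∈ range (s+1), (if j ∈ range (t+1) then
                    (Nat.choose s j : ℂ) * (Nat.choose t j : ℂ) * ((tq k : ℝ) : ℂ)^j
                      * Xc^j * Sold i^(s-j) * Cold i^(t-j) else 0)) :=
              Finset.sum_congr rfl (fun i _ => Finset.sum_congr rfl (fun k _ => hcancel _ _ _))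
          _ = ∑ i : ι, ∑ j ∈ range (s+1), ∑ k : Fin (n+1),
                  (p i : ℂ) * (wq k : ℂ) *
                  (if j ∈ range (t+1) then
                    (Nat.choose s j : ℂ) * (Nat.choose t j : ℂ) * ((tq k : ℝ) : ℂ)^j
                      * Xc^j * Sold i^(s-j) * Cold i^(t-j) else 0) := by
              apply Finset.sum_congr rfl
              intro i _
              rw [← Finset.sum_comm]
              apply Finset.sum_congr rfl
              intro k _
              rw [Finset.mul_sum]
          _ = ∑ j ∈ range (s+1), ∑ i : ι, ∑ k : Fin (n+1),
                  (p i : ℂ) * (wq k : ℂ) *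
                  (if j ∈ range (t+1) then
                    (Nat.choose s j : ℂ) * (Nat.choose t j : ℂ) * ((tq k : ℝ) : ℂ)^j
                      * Xc^j * Sold i^(s-j) * Cold i^(t-j) else 0) := Finset.sum_comm
          _ = ∑ j ∈ range (s+1), (if j ∈ range (t+1) then
                  (Nat.choose s j : ℂ) * (Nat.choose t j : ℂ) * (j.factorial : ℂ) * Xc^j
                    * ∑ i : ι, (p i : ℂ) * (Sold i^(s-j) * Cold i^(t-j)) else 0) := by
              apply Finset.sum_congr rfl
              intro j hj
              have hjn : j ≤ n := by
                simp only [Finset.mem_range] at hj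
                omega
              by_cases hmem : j ∈ range (t+1)
              · rw [if_pos hmem]
                calc ∑ i : ι, ∑ k : Fin (n+1),
                      (p i : ℂ) * (wq k : ℂ) *
                      (if j ∈ range (t+1) then
                        (Nat.choose s j : ℂ) * (Nat.choose t j : ℂ) * ((tq k : ℝ) : ℂ)^j
                          * Xc^j * Sold i^(s-j) * Cold i^(t-j) else 0)
                    = ∑ i : ι, ∑ k : Fin (n+1),
                        ((Nat.choose s j : ℂ) * (Nat.choose t j : ℂ) * Xc^j
                          * ((p i : ℂ) * (Sold i^(s-j) * Cold i^(t-j))))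
                          * ((wq k : ℂ) * ((tq k : ℝ) : ℂ)^j) := by
                      apply Finset.sum_congr rfl
                      intro i _
                      apply Finset.sum_congr rfl
                      intro k _
                      rw [if_pos hmem]
                      ring
                  _ = ∑ i : ι, ((Nat.choose s j : ℂ) * (Nat.choose t j : ℂ) * Xc^j
                          * ((p i : ℂ) * (Sold i^(s-j) * Cold i^(t-j))))
                          * ∑ k : Fin (n+1), ((wq k : ℂ) * ((tq k : ℝ) : ℂ)^j) := by
                      apply Finset.sum_congr rfl
                      intro i _
                      rw [← Finset.mul_sum]
                  _ = ∑ i : ι, ((Nat.choose s j : ℂ) * (Nat.choose t j : ℂ) * Xc^j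
                          * ((p i : ℂ) * (Sold i^(s-j) * Cold i^(t-j))))
                          * (j.factorial : ℂ) := by
                      apply Finset.sum_congr rfl
                      intro i _
                      rw [hqC j hjn]
                  _ = (Nat.choose s j : ℂ) * (Nat.choose t j : ℂ) * (j.factorial : ℂ) * Xc^j
                        * ∑ i : ι, (p i : ℂ) * (Sold i^(s-j) * Cold i^(t-j)) := by
                      rw [Finset.mul_sum]
                      apply Finset.sum_congr rfl
                      intro i _
                      ring
              · rw [if_neg hmem]
                apply Finset.sum_eq_zero
                intro i _
                apply Finset.sum_eq_zero
                intro k _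
                rw [if_neg hmem, mul_zero]
          _ = ∑ j ∈ range (s+1), (if j ∈ range (t+1) then
                  (Nat.choose s j : ℂ) * (Nat.choose t j : ℂ) * (j.factorial : ℂ) * Xc^j
                    * (if s - j = t - j then (((s-j).factorial : ℕ) : ℂ) * Yc^(s-j) else 0)
                else 0) := by
              apply Finset.sum_congr rfl
              intro j hj
              by_cases hmem : j ∈ range (t+1)
              · rw [if_pos hmem, if_pos hmem]
                have hIH := hdes (s-j) (t-j) (by omega) (by omega) (Fin.tail y)
                congr 1
                calc ∑ i : ι, (p i : ℂ) * (Sold i^(s-j) * Cold i^(t-j))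
                    = ∑ i : ι, (p i : ℂ) * (∑ j' : Fin d, (starRingEnd ℂ) (γ i j')
                          * Fin.tail y j')^(s-j)
                        * ((starRingEnd ℂ) (∑ j' : Fin d, (starRingEnd ℂ) (γ i j')
                          * Fin.tail y j'))^(t-j) := by
                      apply Finset.sum_congr rfl
                      intro i _
                      rw [hSold, hCold]
                      ring
                  _ = if s - j = t - j then (((s-j).factorial : ℕ) : ℂ) * Yc^(s-j) else 0 := by
                      rw [hIH, hYc]
              · rw [if_neg hmem, if_neg hmem]
          _ = if s = t then (s.factorial : ℂ)
                * (((∑ j : Fin (d+1), ‖y j‖ ^ 2 : ℝ)) : ℂ) ^ s else 0 := by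
              by_cases hst : s = t
              · subst hst
                rw [if_pos rfl]
                have hsplit : ((∑ j : Fin (d+1), ‖y j‖ ^ 2 : ℝ) : ℂ) = Xc + Yc := by
                  rw [Fin.sum_univ_succ]
                  push_cast
                  rw [hXc, hYc]
                  push_cast
                  rfl
                rw [hsplit]
                calc ∑ j ∈ range (s+1), (if j ∈ range (s+1) then
                        (Nat.choose s j : ℂ) * (Nat.choose s j : ℂ) * (j.factorial : ℂ) * Xc^j
                          * (if s - j = s - j then (((s-j).factorial : ℕ) : ℂ) * Yc^(s-j) else 0)
                      else 0)
                    = ∑ j ∈ range (s+1),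
                        (s.factorial : ℂ) * (Xc^j * Yc^(s-j) * (Nat.choose s j : ℂ)) := by
                      apply Finset.sum_congr rfl
                      intro j hj
                      have hjs : j ≤ s := by
                        simp only [Finset.mem_range] at hj
                        omega
                      rw [if_pos hj, if_pos rfl]
                      have hnat : (s.choose j) * (s.choose j) * j.factorial
                          * (s-j).factorial = s.factorial * s.choose j := by
                        rw [show (s.choose j) * (s.choose j) * j.factorial * (s-j).factorial
                            = (s.choose j * j.factorial * (s-j).factorial) * s.choose j by ring,
                          Nat.choose_mul_factorial_mul_factorial hjs]
                      have hnatC : ((s.choose j : ℂ) * (s.choose j : ℂ) * (j.factorial : ℂ)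
                          * (((s-j).factorial : ℕ) : ℂ)) = (s.factorial : ℂ) * (s.choose j : ℂ) := by
                        exact_mod_cast congrArg (fun m : ℕ => (m : ℂ)) hnat
                      calc (Nat.choose s j : ℂ) * (Nat.choose s j : ℂ) * (j.factorial : ℂ) * Xc^j
                            * ((((s-j).factorial : ℕ) : ℂ) * Yc^(s-j))
                          = ((s.choose j : ℂ) * (s.choose j : ℂ) * (j.factorial : ℂ)
                              * (((s-j).factorial : ℕ) : ℂ)) * (Xc^j * Yc^(s-j)) := by ring
                        _ = ((s.factorial : ℂ) * (s.choose j : ℂ)) * (Xc^j * Yc^(s-j)) := by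
                            rw [hnatC]
                        _ = (s.factorial : ℂ) * (Xc^j * Yc^(s-j) * (Nat.choose s j : ℂ)) := by
                            ring
                  _ = (s.factorial : ℂ) * ∑ j ∈ range (s+1),
                        Xc^j * Yc^(s-j) * (Nat.choose s j : ℂ) := by
                      rw [Finset.mul_sum]
                  _ = (s.factorial : ℂ) * (Xc + Yc)^s := by
                      rw [add_pow]
              · rw [if_neg hst]
                apply Finset.sum_eq_zero
                intro j hj
                by_cases hmem : j ∈ range (t+1)
                · rw [if_pos hmem]
                  have hne2 : ¬ (s - j = t - j) := by
                    simp only [Finset.mem_range] at hj hmem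
                    omega
                  rw [if_neg hne2, mul_zero]
                · rw [if_neg hmem]
        exact main


end DesignAux

open Complex

/-- Existence of discrete complex spherical `n`-designs of order `(n+1)^{2d}`:
there are vectors `γ_i ∈ ℂ^d` and nonnegative weights `p_i` with
`(∑_j |y_j|²)^n = ∑_i p_i |⟨γ_i, y⟩|^{2n}` for all `y ∈ ℂ^d`. -/
theorem discrete_complex_spherical_design_exists (n d : ℕ) :
    ∃ (γ : Fin ((n + 1) ^ (2 * d)) → (Fin d → ℂ))
      (p : Fin ((n + 1) ^ (2 * d)) → ℝ),
      (∀ i, 0 ≤ p i) ∧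
      ∀ y : Fin d → ℂ,
        (∑ j, ‖y j‖ ^ 2) ^ n
          = ∑ i, p i * ‖∑ j, (starRingEnd ℂ) (γ i j) * y j‖ ^ (2 * n) := by
  classical
  obtain ⟨ι, instι, γ0, p0, hcard, hpos, hdes⟩ := DesignAux.design_exists n d
  letI := instι
  set e : Fin ((n + 1) ^ (2 * d)) ≃ ι := (Fintype.equivFinOfCardEq hcard).symm with he
  refine ⟨fun i => γ0 (e i), fun i => p0 (e i) / n.factorial,
    fun i => div_nonneg (hpos (e i)) (Nat.cast_nonneg _), ?_⟩
  intro y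
  have h := hdes n n le_rfl le_rfl y
  rw [if_pos rfl] at h
  have hfac : (n.factorial : ℝ) ≠ 0 := Nat.cast_ne_zero.mpr n.factorial_ne_zero
  have hterm : ∀ i : ι,
      (p0 i : ℂ) * (∑ j, (starRingEnd ℂ) (γ0 i j) * y j) ^ n *
        ((starRingEnd ℂ) (∑ j, (starRingEnd ℂ) (γ0 i j) * y j)) ^ n
      = ((p0 i * ‖∑ j, (starRingEnd ℂ) (γ0 i j) * y j‖ ^ (2*n) : ℝ) : ℂ) := by
    intro i
    set z : ℂ := ∑ j, (starRingEnd ℂ) (γ0 i j) * y j with hz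
    calc (p0 i : ℂ) * z ^ n * ((starRingEnd ℂ) z) ^ n
        = (p0 i : ℂ) * (z * (starRingEnd ℂ) z) ^ n := by rw [mul_pow]; ring
      _ = (p0 i : ℂ) * ((Complex.normSq z : ℝ) : ℂ) ^ n := by rw [Complex.mul_conj]
      _ = (p0 i : ℂ) * ((‖z‖ ^ 2 : ℝ) : ℂ) ^ n := by rw [Complex.normSq_eq_norm_sq]
      _ = ((p0 i * ‖z‖ ^ (2*n) : ℝ) : ℂ) := by
          push_cast
          rw [pow_mul]
  have hre : ∑ i : ι, p0 i * ‖∑ j, (starRingEnd ℂ) (γ0 i j) * y j‖ ^ (2*n)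
      = (n.factorial : ℝ) * (∑ j, ‖y j‖ ^ 2) ^ n := by
    have h2 : ((∑ i : ι, p0 i * ‖∑ j, (starRingEnd ℂ) (γ0 i j) * y j‖ ^ (2*n) : ℝ) : ℂ)
        = (((n.factorial : ℝ) * (∑ j, ‖y j‖ ^ 2) ^ n : ℝ) : ℂ) := by
      rw [show ((∑ i : ι, p0 i * ‖∑ j, (starRingEnd ℂ) (γ0 i j) * y j‖ ^ (2*n) : ℝ) : ℂ)
          = ∑ i : ι, ((p0 i * ‖∑ j, (starRingEnd ℂ) (γ0 i j) * y j‖ ^ (2*n) : ℝ) : ℂ)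
        from by push_cast; rfl]
      rw [Finset.sum_congr rfl (fun i _ => (hterm i).symm), h]
      push_cast
      rfl
    exact_mod_cast h2
  calc (∑ j, ‖y j‖ ^ 2) ^ n
      = ((n.factorial : ℝ) * (∑ j, ‖y j‖ ^ 2) ^ n) / n.factorial := by
        field_simp
    _ = (∑ i : ι, p0 i * ‖∑ j, (starRingEnd ℂ) (γ0 i j) * y j‖ ^ (2*n)) / n.factorial := by
        rw [hre]
    _ = ∑ i : ι, (p0 i / n.factorial) * ‖∑ j, (starRingEnd ℂ) (γ0 i j) * y j‖ ^ (2*n) := by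
        rw [Finset.sum_div]
        apply Finset.sum_congr rfl
        intro i _
        ring
    _ = ∑ i, (p0 (e i) / n.factorial)
          * ‖∑ j, (starRingEnd ℂ) (γ0 (e i) j) * y j‖ ^ (2*n) := by
        rw [← Equiv.sum_comp e (fun i0 : ι => (p0 i0 / n.factorial)
          * ‖∑ j, (starRingEnd ℂ) (γ0 i0 j) * y j‖ ^ (2*n))]
end
end

section
/- For integers n ≥ k ≥ 1, d ≥ 1, define q̂(n,k,t) as the coefficients in the inverse Chiribella expansion rescaled so that the maps are channels. Then the consecutive-ratio bound holds: for 0 ≤ s ≤ k−1, |q̂(n,k,k−s−1)| / |q̂(n,k,k−s)| = ((k+d−1−s)/(n+k+d−1−s)) · ((k−s)/(s+1)) ≤ k(k+d−1)/(n+k+d−1). -/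
/-- `d[m] = dim ∨^m ℂ^d = C(m+d−1, m)`. -/
noncomputable def dimSym (d m : ℕ) : ℝ := ((m + d - 1).choose m : ℝ)

/-- Inverse Chiribella coefficients
`q(n,k,t) = (−1)^{t+k}·C(n+t,t)·C(k,t)/C(n,k)·d[n+t]/d[n+k]`. -/
noncomputable def qCoef (d n k t : ℕ) : ℝ :=
  (-1) ^ (t + k) * (((n + t).choose t * k.choose t : ℕ) : ℝ) / (n.choose k : ℝ) *
    (dimSym d (n + t) / dimSym d (n + k))

/-- Rescaled (channel-normalized) inverse Chiribella coefficients
`q̂(n,k,t) = q(n,k,t)·d[n+k]·d[k]/(d[n]·d[t])`. -/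
noncomputable def qHat (d n k t : ℕ) : ℝ :=
  qCoef d n k t * (dimSym d (n + k) * dimSym d k) / (dimSym d n * dimSym d t)

lemma dimSym_pos {d : ℕ} (hd : 1 ≤ d) (m : ℕ) : 0 < dimSym d m := by
  unfold dimSym
  exact_mod_cast Nat.choose_pos (by omega)

lemma dimSym_succ {d : ℕ} (hd : 1 ≤ d) (m : ℕ) :
    ((m : ℝ) + 1) * dimSym d (m + 1) = ((m : ℝ) + d) * dimSym d m := by
  unfold dimSym
  have e : m + d - 1 + 1 = m + d := by omega
  have e2 : m + 1 + d - 1 = m + d := by omega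
  have h := Nat.add_one_mul_choose_eq (m + d - 1) m
  rw [e] at h
  rw [e2]
  have h' : ((m : ℝ) + d) * ((m + d - 1).choose m : ℝ) = ((m + d).choose (m + 1) : ℝ) * ((m : ℝ) + 1) := by
    exact_mod_cast h
  push_cast
  linarith

lemma abs_qHat (d n k t : ℕ) :
    |qHat d n k t| = (((n + t).choose t * k.choose t : ℕ) : ℝ) / (n.choose k : ℝ) *
      (dimSym d (n + t) / dimSym d (n + k)) * (dimSym d (n + k) * dimSym d k) /
      (dimSym d n * dimSym d t) := by
  have h : qHat d n k t = (-1) ^ (t + k) *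
      ((((n + t).choose t * k.choose t : ℕ) : ℝ) / (n.choose k : ℝ) *
        (dimSym d (n + t) / dimSym d (n + k)) * (dimSym d (n + k) * dimSym d k) /
        (dimSym d n * dimSym d t)) := by
    unfold qHat qCoef; ring
  rw [h, abs_mul, abs_pow, abs_neg, abs_one, one_pow, one_mul, abs_of_nonneg]
  simp only [dimSym]
  positivity

set_option maxHeartbeats 1600000 in
/-- Consecutive-ratio bound for the rescaled inverse Chiribella coefficients:
for `0 ≤ s ≤ k−1`,
`|q̂(n,k,k−s−1)|/|q̂(n,k,k−s)| = ((k+d−1−s)/(n+k+d−1−s))·((k−s)/(s+1))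
  ≤ k(k+d−1)/(n+k+d−1)`. -/
theorem qHat_consecutive_ratio_bound (n k d s : ℕ)
    (hd : 1 ≤ d) (hk : 1 ≤ k) (hkn : k ≤ n) (hs : s ≤ k - 1) :
    |qHat d n k (k - s - 1)| / |qHat d n k (k - s)|
      = (((k : ℝ) + d - 1 - s) / ((n : ℝ) + k + d - 1 - s)) * (((k : ℝ) - s) / (s + 1)) ∧
    (((k : ℝ) + d - 1 - s) / ((n : ℝ) + k + d - 1 - s)) * (((k : ℝ) - s) / (s + 1))
      ≤ (k : ℝ) * ((k : ℝ) + d - 1) / ((n : ℝ) + k + d - 1) := by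
  set u := k - s - 1 with hu_def
  have hu : k = s + u + 1 := by omega
  have h1 : k - s - 1 = u := rfl
  have h2 : k - s = u + 1 := by omega
  have hkR : (k : ℝ) = (s : ℝ) + u + 1 := by rw [hu]; push_cast; ring
  -- nonzeroness / positivity facts
  have hdnk := dimSym_pos (d := d) hd (n + k)
  have hdn := dimSym_pos (d := d) hd n
  have hdk := dimSym_pos (d := d) hd k
  have hdu := dimSym_pos (d := d) hd u
  have hdu1 := dimSym_pos (d := d) hd (u + 1)
  have hdnu := dimSym_pos (d := d) hd (n + u)
  have hdnu1 := dimSym_pos (d := d) hd (n + u + 1)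
  have hCnk : (0 : ℝ) < (n.choose k : ℝ) := by
    exact_mod_cast Nat.choose_pos hkn
  have hCnu : (0 : ℝ) < ((n + u).choose u : ℝ) := by
    exact_mod_cast Nat.choose_pos (by omega)
  have hCku : (0 : ℝ) < (k.choose u : ℝ) := by
    exact_mod_cast Nat.choose_pos (by omega)
  have hu1 : ((u : ℝ) + 1) ≠ 0 := by positivity
  have hnu1 : ((n : ℝ) + u + 1) ≠ 0 := by positivity
  have hs1 : ((s : ℝ) + 1) ≠ 0 := by positivity
  have hnud : ((n : ℝ) + u + d) ≠ 0 := by positivity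
  -- ratio identities
  have r1 : ((n + u + 1).choose (u + 1) : ℝ)
      = (((n : ℝ) + u + 1) * ((n + u).choose u : ℝ)) / ((u : ℝ) + 1) := by
    rw [eq_div_iff hu1]
    have h := Nat.add_one_mul_choose_eq (n + u) u
    have h' : ((n : ℝ) + u + 1) * ((n + u).choose u : ℝ) = ((n + u + 1).choose (u + 1) : ℝ) * ((u : ℝ) + 1) := by
      exact_mod_cast h
    linarith
  have r2 : (k.choose (u + 1) : ℝ) = (((s : ℝ) + 1) * (k.choose u : ℝ)) / ((u : ℝ) + 1) := by
    rw [eq_div_iff hu1]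
    have h := Nat.choose_succ_right_eq k u
    have hku : k - u = s + 1 := by omega
    rw [hku] at h
    have h' : (k.choose (u + 1) : ℝ) * ((u : ℝ) + 1) = (k.choose u : ℝ) * ((s : ℝ) + 1) := by
      exact_mod_cast h
    linarith
  have r3 : dimSym d (n + u + 1)
      = (((n : ℝ) + u + d) * dimSym d (n + u)) / ((n : ℝ) + u + 1) := by
    rw [eq_div_iff hnu1]
    have h := dimSym_succ (d := d) hd (n + u)
    push_cast at h
    linarith
  have r4 : dimSym d (u + 1) = (((u : ℝ) + d) * dimSym d u) / ((u : ℝ) + 1) := by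
    rw [eq_div_iff hu1]
    have h := dimSym_succ (d := d) hd u
    linarith
  constructor
  · have hq1 : 0 < |qHat d n k (u + 1)| := by
      rw [abs_qHat]
      have c1 : (0:ℝ) < (((n + (u + 1)).choose (u + 1) * k.choose (u + 1) : ℕ) : ℝ) := by
        exact_mod_cast Nat.mul_pos (Nat.choose_pos (by omega)) (Nat.choose_pos (by omega))
      exact div_pos (mul_pos (mul_pos (div_pos c1 hCnk) (div_pos hdnu1 hdnk))
        (mul_pos hdnk hdk)) (mul_pos hdn hdu1)
    have key : |qHat d n k u| * (((n:ℝ) + u + d) * ((s:ℝ) + 1))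
        = |qHat d n k (u + 1)| * (((u:ℝ) + d) * ((u:ℝ) + 1)) := by
      rw [abs_qHat, abs_qHat]
      push_cast
      simp only [← Nat.add_assoc]
      rw [r1, r2, r3, r4]
      have hnk0 : (n.choose k : ℝ) ≠ 0 := ne_of_gt hCnk
      have d1 : dimSym d (n + k) ≠ 0 := ne_of_gt hdnk
      have d2 : dimSym d n ≠ 0 := ne_of_gt hdn
      have d3 : dimSym d u ≠ 0 := ne_of_gt hdu
      field_simp
    have eR : ((k : ℝ) + d - 1 - s) / ((n : ℝ) + k + d - 1 - s) * (((k : ℝ) - s) / (s + 1))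
        = (((u:ℝ) + d) * ((u:ℝ) + 1)) / ((((n:ℝ) + u + d)) * ((s:ℝ) + 1)) := by
      rw [hkR, div_mul_div_comm]
      congr 1 <;> ring
    rw [h2, eR, div_eq_iff (ne_of_gt hq1), div_mul_eq_mul_div,
      eq_div_iff (by positivity : (((n:ℝ) + u + d)) * ((s:ℝ) + 1) ≠ 0)]
    linear_combination key
  · rw [hkR]
    have e1 : (s : ℝ) + u + 1 + d - 1 - s = (u : ℝ) + d := by ring
    have e2 : (n : ℝ) + ((s : ℝ) + u + 1) + d - 1 - s = (n : ℝ) + u + d := by ring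
    have e3 : (s : ℝ) + u + 1 - s = (u : ℝ) + 1 := by ring
    have e4 : (n : ℝ) + ((s : ℝ) + u + 1) + d - 1 = (n : ℝ) + s + u + d := by ring
    rw [e1, e2, e3, e4]
    have hd' : (1 : ℝ) ≤ (d : ℝ) := by exact_mod_cast hd
    have hn0 : (0 : ℝ) ≤ (n : ℝ) := Nat.cast_nonneg n
    have hs0 : (0 : ℝ) ≤ (s : ℝ) := Nat.cast_nonneg s
    have hu0 : (0 : ℝ) ≤ (u : ℝ) := Nat.cast_nonneg u
    have hp1 : (0 : ℝ) < ((n : ℝ) + u + d) * ((s : ℝ) + 1) := by nlinarith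
    have hp2 : (0 : ℝ) < (n : ℝ) + s + u + d := by linarith
    rw [div_mul_div_comm, div_le_div_iff₀ hp1 hp2]
    have hnk : (k : ℝ) ≤ n := by exact_mod_cast hkn
    rw [hkR] at hnk
    nlinarith [mul_nonneg (mul_nonneg hs0 hu0) (le_trans zero_le_one hd'),
      mul_nonneg hs0 hu0, mul_nonneg hs0 (le_trans zero_le_one hd'),
      sq_nonneg ((s:ℝ)), sq_nonneg ((s:ℝ) + u),
      mul_nonneg (mul_nonneg hs0 hs0) hu0,
      mul_nonneg (mul_nonneg hs0 hs0) (le_trans zero_le_one hd'),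
      mul_nonneg (mul_nonneg hs0 hu0) hu0,
      mul_nonneg hs0 hn0, mul_nonneg (mul_nonneg hs0 hs0) hn0,
      mul_nonneg (mul_nonneg hs0 hu0) hn0,
      mul_nonneg (mul_nonneg hs0 hn0) (le_trans zero_le_one hd')]
end
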